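/- arXiv:1112.3060 — 7 statements merged into one kernel-verified Lean document; each statement's English description precedes it below -/
import Mathlib

section
/- Let L = (L_1 ≥ L_2 ≥ ⋯ ≥ L_K) and L' = (L'_1 ≥ L'_2 ≥ ⋯ ≥ L'_{K'}) be weakly decreasing sequences of positive integers with L ≼ L'. If L' ∈ TFF(α, N), then L ∈ TFF(α, N). -/
/-!
Rank can be moved between the members of a TFF. If `P` and `Q` are orthogonal projections with
`rank Q < rank P`, a dimension count gives a unit vector `v ∈ range P ∩ ker Q`, and with
`E = v vᵀ` the matrices `P - E` and `Q + E` are orthogonal projections of ranks `rank P - 1` and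
`rank Q + 1` with the same sum as `P` and `Q`.

If `M ≠ L` have equal totals, `L` is decreasing and the partial sums of `M` dominate those of
`L`, take `i` first with `L i < M i` and `j` first with `M j < L j`. Then `i < j`,
`M j < L j ≤ L i < M i`, and the partial sums of `M` exceed those of `L` strictly on `(i, j]`,
so moving one unit from `M i` to `M j` keeps the domination and lowers the sum of all partial
sums of `M`. Starting from `L'`, cut or padded with zeros to the length of `L` (majorization
forces the part cut off to vanish), this ends at `L`.
-/

open Matrix

/-- `L` is a tight fusion frame (TFF) sequence for frame bound `α` in dimension `N`:
there exist orthogonal projections `P i` on `ℝ^N` with `rank (P i) = L i` whose sum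
is `α` times the identity. -/
def IsTFF (N : ℕ) (α : ℝ) {K : ℕ} (L : Fin K → ℕ) : Prop :=
  ∃ P : Fin K → Matrix (Fin N) (Fin N) ℝ,
    (∀ i, P i * P i = P i) ∧
    (∀ i, (P i)ᵀ = P i) ∧
    (∀ i, (P i).rank = L i) ∧
    (∑ i, P i) = α • (1 : Matrix (Fin N) (Fin N) ℝ)

/-- `Majorizes L L'` means `L ≼ L'`: the two sequences have equal total sums and the
partial sums of `L` are dominated by those of `L'` for all `k ≤ min K K'`. -/
def Majorizes {K K' : ℕ} (L : Fin K → ℕ) (L' : Fin K' → ℕ) : Prop :=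
  (∑ i, L i = ∑ i, L' i) ∧
  ∀ k ≤ min K K',
    ∑ i ∈ Finset.univ.filter (fun i : Fin K => (i : ℕ) < k), L i ≤
      ∑ i ∈ Finset.univ.filter (fun i : Fin K' => (i : ℕ) < k), L' i

namespace Matrix

variable {n : Type*} [Fintype n] {𝕜 : Type*} [Field 𝕜]

theorem isIdempotentElem_toLin' [DecidableEq n] {A : Matrix n n 𝕜} (hA : IsIdempotentElem A) :
    IsIdempotentElem (toLin' A) :=
  hA.map toLinAlgEquiv'

theorem trace_eq_rank_of_isIdempotentElem {A : Matrix n n 𝕜} (hA : IsIdempotentElem A) :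
    A.trace = A.rank := by
  classical
  rw [← trace_toLin'_eq, (LinearMap.IsIdempotentElem.isProj_range _
    (isIdempotentElem_toLin' hA)).trace, rank, toLin'_apply']

theorem rank_eq_zero_iff {m : Type*} {A : Matrix m n 𝕜} : A.rank = 0 ↔ A = 0 := by
  classical
  refine ⟨fun h => ?_, fun h => h ▸ rank_zero⟩
  rw [rank, Submodule.finrank_eq_zero, LinearMap.range_eq_bot] at h
  rwa [← toLin'_apply', LinearEquiv.map_eq_zero_iff] at h

theorem exists_mulVec_eq_self_and_mulVec_eq_zero {P Q : Matrix n n 𝕜} (hP : IsIdempotentElem P)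
    (hlt : Q.rank < P.rank) : ∃ v ≠ 0, P *ᵥ v = v ∧ Q *ᵥ v = 0 := by
  classical
  set f := Q.mulVecLin.rangeRestrict ∘ₗ (LinearMap.range P.mulVecLin).subtype
  obtain ⟨⟨v, hvP⟩, hvf, hv0⟩ :=
    (Submodule.ne_bot_iff _).mp (LinearMap.ker_ne_bot_of_finrank_lt (f := f) hlt)
  refine ⟨v, by simpa using hv0, ?_, by simpa [f, Subtype.ext_iff] using hvf⟩
  rwa [← toLin'_apply', LinearMap.IsIdempotentElem.mem_range_iff (isIdempotentElem_toLin' hP)]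
    at hvP

section CharZero

variable [CharZero 𝕜]

theorem rank_sub_add_rank_of_mul_eq {P E : Matrix n n 𝕜} (hP : IsIdempotentElem P)
    (hE : IsIdempotentElem E) (hPE : P * E = E) (hEP : E * P = E) :
    (P - E).rank + E.rank = P.rank := by
  have h := trace_eq_rank_of_isIdempotentElem (hE.sub hP hEP hPE)
  rw [trace_sub, trace_eq_rank_of_isIdempotentElem hP, trace_eq_rank_of_isIdempotentElem hE,
    sub_eq_iff_eq_add] at h
  exact_mod_cast h.symm

theorem rank_add_of_mul_eq_zero {Q E : Matrix n n 𝕜} (hQ : IsIdempotentElem Q)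
    (hE : IsIdempotentElem E) (hQE : Q * E = 0) (hEQ : E * Q = 0) :
    (Q + E).rank = Q.rank + E.rank := by
  have h := trace_eq_rank_of_isIdempotentElem (hQ.add hE (by rw [hQE, hEQ, add_zero]))
  rw [trace_add, trace_eq_rank_of_isIdempotentElem hQ, trace_eq_rank_of_isIdempotentElem hE] at h
  exact_mod_cast h.symm

end CharZero

theorem exists_rankOne_projection_of_rank_lt [LinearOrder 𝕜] [IsStrictOrderedRing 𝕜]
    {P Q : Matrix n n 𝕜} (hP : IsIdempotentElem P) (hPs : P.IsSymm) (hQs : Q.IsSymm)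
    (hlt : Q.rank < P.rank) :
    ∃ E : Matrix n n 𝕜, IsIdempotentElem E ∧ E.IsSymm ∧ E.rank = 1 ∧
      P * E = E ∧ E * P = E ∧ Q * E = 0 ∧ E * Q = 0 := by
  obtain ⟨v, hv0, hPv, hQv⟩ := exists_mulVec_eq_self_and_mulVec_eq_zero hP hlt
  have hvv : v ⬝ᵥ v ≠ 0 := fun h => hv0 (dotProduct_self_eq_zero.mp h)
  have hvP : v ᵥ* P = v := by rw [← mulVec_transpose, hPs.eq, hPv]
  have hvQ : v ᵥ* Q = 0 := by rw [← mulVec_transpose, hQs.eq, hQv]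
  have hE : IsIdempotentElem ((v ⬝ᵥ v)⁻¹ • vecMulVec v v) := by
    rw [IsIdempotentElem, smul_mul_smul_comm, vecMulVec_mul_vecMulVec, vecMulVec_smul, smul_smul,
      mul_assoc, inv_mul_cancel₀ hvv, mul_one]
  refine ⟨(v ⬝ᵥ v)⁻¹ • vecMulVec v v, hE, ?_, ?_, ?_, ?_, ?_, ?_⟩
  · rw [IsSymm, transpose_smul, transpose_vecMulVec]
  · have htrace := trace_eq_rank_of_isIdempotentElem hE
    rw [trace_smul, trace_vecMulVec, smul_eq_mul, inv_mul_cancel₀ hvv] at htrace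
    exact_mod_cast htrace.symm
  · rw [Matrix.mul_smul, mul_vecMulVec, hPv]
  · rw [smul_mul, vecMulVec_mul, hvP]
  · rw [Matrix.mul_smul, mul_vecMulVec, hQv, zero_vecMulVec, smul_zero]
  · rw [smul_mul, vecMulVec_mul, hvQ, vecMulVec_zero, smul_zero]

end Matrix

open Finset

section PartialSums

variable {β : Type*} {K : ℕ}

def zeroExtend [Zero β] (f : Fin K → β) (n : ℕ) : β :=
  if h : n < K then f ⟨n, h⟩ else 0

def partialSum [AddCommMonoid β] (f : Fin K → β) (k : ℕ) : β :=
  ∑ i ∈ univ.filter (fun i : Fin K => (i : ℕ) < k), f i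

@[simp]
theorem zeroExtend_val [Zero β] (f : Fin K → β) (i : Fin K) : zeroExtend f i = f i := by
  simp [zeroExtend]

theorem zeroExtend_of_le [Zero β] (f : Fin K → β) {n : ℕ} (hn : K ≤ n) : zeroExtend f n = 0 :=
  dif_neg hn.not_gt

theorem zeroExtend_restrict_eq [Zero β] {K' : ℕ} {f : Fin K' → β}
    (hf : ∀ n, K ≤ n → zeroExtend f n = 0) :
    zeroExtend (fun i : Fin K => zeroExtend f i) = zeroExtend f := by
  ext n
  by_cases hn : n < K
  · simp [zeroExtend, hn]
  · rw [zeroExtend_of_le _ (not_lt.mp hn), hf n (not_lt.mp hn)]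

variable [AddCommMonoid β]

theorem sum_range_zeroExtend (f : Fin K → β) {n : ℕ} (hn : K ≤ n) :
    ∑ m ∈ range n, zeroExtend f m = ∑ i, f i := by
  rw [← sum_subset (range_subset_range.mpr hn) fun m _ hm => zeroExtend_of_le f (by simpa using hm),
    ← Fin.sum_univ_eq_sum_range]
  simp

theorem partialSum_eq_sum_range (f : Fin K → β) (k : ℕ) :
    partialSum f k = ∑ m ∈ range k, zeroExtend f m := by
  have hfilter : (univ.filter fun i : Fin K => (i : ℕ) < k).map Fin.valEmbedding =
      (range k).filter (· < K) := by
    ext m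
    simp only [mem_map, mem_filter, mem_univ, true_and, Fin.valEmbedding_apply, mem_range]
    exact ⟨by rintro ⟨i, hi, rfl⟩; exact ⟨hi, i.2⟩, fun ⟨hk, hK⟩ => ⟨⟨m, hK⟩, hk, rfl⟩⟩
  rw [partialSum, ← sum_filter_of_ne (p := (· < K)) fun m _ hm => ?_, ← hfilter, sum_map]
  · simp
  · by_contra hmK
    exact hm (zeroExtend_of_le f (not_lt.mp hmK))

theorem partialSum_of_le (f : Fin K → β) {k : ℕ} (hk : K ≤ k) : partialSum f k = ∑ i, f i := by
  rw [partialSum_eq_sum_range, sum_range_zeroExtend f hk]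

theorem partialSum_succ (f : Fin K → β) (k : ℕ) :
    partialSum f (k + 1) = partialSum f k + zeroExtend f k := by
  rw [partialSum_eq_sum_range, partialSum_eq_sum_range, sum_range_succ]

theorem partialSum_add (f g : Fin K → β) (k : ℕ) :
    partialSum (f + g) k = partialSum f k + partialSum g k :=
  sum_add_distrib

theorem partialSum_single (i : Fin K) (b : β) (k : ℕ) :
    partialSum (Pi.single i b) k = if (i : ℕ) < k then b else 0 := by
  simp [partialSum, sum_pi_single']

theorem partialSum_add_ite_eq_of_add_single_eq {f g : Fin K → β} {i j : Fin K} {b : β}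
    (h : g + Pi.single i b = f + Pi.single j b) (k : ℕ) :
    partialSum g k + (if (i : ℕ) < k then b else 0) =
      partialSum f k + (if (j : ℕ) < k then b else 0) := by
  simpa only [partialSum_add, partialSum_single] using congrArg (partialSum · k) h

theorem partialSum_eq_of_zeroExtend_eq {K' : ℕ} {f : Fin K → β} {g : Fin K' → β}
    (h : zeroExtend f = zeroExtend g) : partialSum f = partialSum g := by
  ext k
  rw [partialSum_eq_sum_range, partialSum_eq_sum_range, h]

theorem sum_eq_of_zeroExtend_eq {K' : ℕ} {f : Fin K → β} {g : Fin K' → β}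
    (h : zeroExtend f = zeroExtend g) : ∑ i, f i = ∑ i, g i := by
  rw [← partialSum_of_le f (le_max_left K K'), ← partialSum_of_le g (le_max_right K K'),
    partialSum_eq_of_zeroExtend_eq h]

theorem partialSum_mono (f : Fin K → ℕ) : Monotone (partialSum f) :=
  monotone_nat_of_le_succ fun k => by rw [partialSum_succ]; exact Nat.le_add_right _ _

theorem partialSum_le_sum (f : Fin K → ℕ) (k : ℕ) : partialSum f k ≤ ∑ i, f i :=
  partialSum_of_le f (le_max_right k K) ▸ partialSum_mono f (le_max_left k K)

theorem partialSum_lt_partialSum {f g : Fin K → ℕ} {k : ℕ}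
    (hle : ∀ m : Fin K, (m : ℕ) < k → f m ≤ g m) {m₀ : Fin K} (hm₀ : (m₀ : ℕ) < k)
    (hlt : f m₀ < g m₀) : partialSum f k < partialSum g k :=
  sum_lt_sum (fun m hm => hle m (mem_filter.mp hm).2) ⟨m₀, mem_filter.mpr ⟨mem_univ _, hm₀⟩, hlt⟩

end PartialSums

namespace Majorizes

variable {K K' : ℕ} {L : Fin K → ℕ} {L' : Fin K' → ℕ}

theorem partialSum_le (hmaj : Majorizes L L') (k : ℕ) : partialSum L k ≤ partialSum L' k := by
  by_cases hk : k ≤ min K K'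
  · exact hmaj.2 k hk
  by_cases hK' : K' ≤ k
  · rw [partialSum_of_le L' hK', ← hmaj.1]
    exact partialSum_le_sum L k
  · have hK : K ≤ k := by omega
    calc partialSum L k = partialSum L K := by rw [partialSum_of_le L hK, partialSum_of_le L le_rfl]
      _ ≤ partialSum L' K := hmaj.2 K (by omega)
      _ ≤ partialSum L' k := partialSum_mono L' hK

theorem zeroExtend_of_le (hmaj : Majorizes L L') {n : ℕ} (hn : K ≤ n) : zeroExtend L' n = 0 := by
  have h := calc partialSum L' K + zeroExtend L' n
      ≤ partialSum L' n + zeroExtend L' n := Nat.add_le_add_right (partialSum_mono L' hn) _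
    _ = partialSum L' (n + 1) := (partialSum_succ L' n).symm
    _ ≤ ∑ i, L' i := partialSum_le_sum L' _
    _ = partialSum L K := by rw [← hmaj.1, partialSum_of_le L le_rfl]
    _ ≤ partialSum L' K := hmaj.partialSum_le K
  omega

end Majorizes

theorem exists_transfer_of_partialSum_le {K : ℕ} {L M : Fin K → ℕ} (hL : Antitone L)
    (hsum : ∑ i, M i = ∑ i, L i) (hdom : ∀ k, partialSum L k ≤ partialSum M k) (hML : M ≠ L) :
    ∃ i j : Fin K, M j < M i ∧ i < j ∧
      ∀ k : ℕ, (i : ℕ) < k → k ≤ j → partialSum L k < partialSum M k := by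
  have hex_i : ∃ i, L i < M i := by
    by_contra! h
    exact hML (funext fun i => (sum_eq_sum_iff_of_le fun i _ => h i).mp hsum i (mem_univ i))
  obtain ⟨i, hi_min⟩ := exists_minimal_of_wellFoundedLT _ hex_i
  have hi : L i < M i := hi_min.prop
  have hex_j : ∃ j, M j < L j := by
    by_contra! h
    exact (sum_lt_sum (fun k _ => h k) ⟨i, mem_univ i, hi⟩).ne' hsum
  obtain ⟨j, hj_min⟩ := exists_minimal_of_wellFoundedLT _ hex_j
  have hj : M j < L j := hj_min.prop
  have hij : i < j := by
    refine lt_of_not_ge fun hji => ?_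
    have hji : (j : ℕ) < i :=
      Fin.lt_def.mp (lt_of_le_of_ne hji (by rintro rfl; exact lt_asymm hi hj))
    refine (hdom (j + 1)).not_gt (partialSum_lt_partialSum (fun m hm => ?_) j.val.lt_succ_self hj)
    exact not_lt.mp (hi_min.not_prop_of_lt (Fin.lt_def.mpr (by omega)))
  refine ⟨i, j, by linarith [hL hij.le], hij, fun k hik hkj => ?_⟩
  exact partialSum_lt_partialSum
    (fun m hm => not_lt.mp (hj_min.not_prop_of_lt (Fin.lt_def.mpr (by omega)))) hik hi

namespace IsTFF

variable {N K : ℕ} {α : ℝ}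

theorem transfer {M M' : Fin K → ℕ} {i j : Fin K} (hlt : M j < M i)
    (hM' : M' + Pi.single i 1 = M + Pi.single j 1) (h : IsTFF N α M) : IsTFF N α M' := by
  obtain ⟨P, hP, hPs, hrk, hsum⟩ := h
  have hij : i ≠ j := by rintro rfl; exact lt_irrefl _ hlt
  obtain ⟨E, hE, hEs, hErk, hPiE, hEPi, hPjE, hEPj⟩ :=
    exists_rankOne_projection_of_rank_lt (hP i) (hPs i) (hPs j) (by rwa [hrk, hrk])
  refine ⟨P + Pi.single j E - Pi.single i E, fun k => ?_, fun k => ?_, fun k => ?_, ?_⟩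
  · change IsIdempotentElem _
    rcases eq_or_ne k i with rfl | hki
    · simpa [hij] using hE.sub (hP k) hEPi hPiE
    rcases eq_or_ne k j with rfl | hkj
    · simpa [hki] using IsIdempotentElem.add (hP k) hE (by rw [hPjE, hEPj, add_zero])
    · simp only [Pi.sub_apply, Pi.add_apply, Pi.single_eq_of_ne hki, Pi.single_eq_of_ne hkj,
        add_zero, sub_zero]
      exact hP k
  · rcases eq_or_ne k i with rfl | hki
    · simp [hij, hPs k, hEs.eq]
    rcases eq_or_ne k j with rfl | hkj
    · simp [hki, hPs k, hEs.eq]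
    · simp [hki, hkj, hPs k]
  · have hMk := congrFun hM' k
    have hPk := hrk k
    rcases eq_or_ne k i with rfl | hki
    · have := rank_sub_add_rank_of_mul_eq (hP k) hE hPiE hEPi
      simp [hij] at hMk ⊢
      omega
    rcases eq_or_ne k j with rfl | hkj
    · have := rank_add_of_mul_eq_zero (hP k) hE hPjE hEPj
      simp [hki] at hMk ⊢
      omega
    · simp [hki, hkj] at hMk ⊢
      omega
  · simp [Finset.sum_add_distrib, Finset.sum_sub_distrib, hsum]

theorem of_zeroExtend_eq {K' : ℕ} {M : Fin K → ℕ} {L' : Fin K' → ℕ} (h : IsTFF N α L')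
    (hext : zeroExtend M = zeroExtend L') : IsTFF N α M := by
  obtain ⟨P, hP, hPs, hrk, hsum⟩ := h
  have hrank : ∀ n, (zeroExtend P n).rank = zeroExtend M n := by
    intro n
    rw [hext]
    unfold zeroExtend
    split_ifs
    exacts [hrk _, rank_zero]
  have hPext : zeroExtend (fun i : Fin K => zeroExtend P i) = zeroExtend P :=
    zeroExtend_restrict_eq fun n hn => rank_eq_zero_iff.mp (by rw [hrank, zeroExtend_of_le M hn])
  refine ⟨fun i => zeroExtend P i, fun i => ?_, fun i => ?_, fun i => by simpa using hrank i, ?_⟩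
  · dsimp only [zeroExtend]
    split_ifs
    exacts [hP _, zero_mul 0]
  · dsimp only [zeroExtend]
    split_ifs
    exacts [hPs _, transpose_zero]
  · rw [sum_eq_of_zeroExtend_eq hPext, hsum]

theorem of_partialSum_le {L M : Fin K → ℕ} (hL : Antitone L) (hsum : ∑ i, M i = ∑ i, L i)
    (hdom : ∀ k, partialSum L k ≤ partialSum M k) (h : IsTFF N α M) : IsTFF N α L := by
  induction hμ : ∑ k ∈ range K, partialSum M k using Nat.strong_induction_on generalizing M with
  | _ μ ih =>
  by_cases hML : M = L
  · exact hML ▸ h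
  obtain ⟨i, j, hlt, hij, hstrict⟩ := exists_transfer_of_partialSum_le hL hsum hdom hML
  set M' := M + Pi.single j 1 - Pi.single i 1
  have hM' : M' + Pi.single i 1 = M + Pi.single j 1 := by
    ext k
    rcases eq_or_ne k i with rfl | hki
    · simp [M', hij.ne']
      omega
    · simp [M', hki]
  have hpart := partialSum_add_ite_eq_of_add_single_eq hM'
  refine ih _ ?_ ?_ (fun k => ?_) (h.transfer hlt hM') rfl
  · rw [← hμ]
    refine sum_lt_sum (fun k _ => ?_) ⟨j, mem_range.mpr j.2, ?_⟩
    · have := hpart k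
      split_ifs at this <;> omega
    · have := hpart j
      simp only [Fin.val_fin_lt, hij, if_true, lt_irrefl, if_false] at this
      omega
  · have := hpart K
    simp only [i.2, j.2, if_true] at this
    rw [← partialSum_of_le M' le_rfl, ← hsum, ← partialSum_of_le M le_rfl]
    omega
  · have := hpart k
    have := hdom k
    by_cases hk : (i : ℕ) < k ∧ k ≤ j
    · have := hstrict k hk.1 hk.2
      split_ifs at * <;> omega
    · split_ifs at * <;> omega

end IsTFF

theorem majorization_TFF_general {K K' N : ℕ} (α : ℝ)
    (L : Fin K → ℕ) (L' : Fin K' → ℕ)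
    (hL : Antitone L)
    (hmaj : Majorizes L L')
    (h : IsTFF N α L') :
    IsTFF N α L := by
  have hext : zeroExtend (fun i : Fin K => zeroExtend L' i) = zeroExtend L' :=
    zeroExtend_restrict_eq fun _ hn => hmaj.zeroExtend_of_le hn
  refine (h.of_zeroExtend_eq hext).of_partialSum_le hL ?_ fun k => ?_
  · rw [sum_eq_of_zeroExtend_eq hext, hmaj.1]
  · rw [partialSum_eq_of_zeroExtend_eq hext]
    exact hmaj.partialSum_le k

/-- If `L ≼ L'` and `L'` is a TFF sequence for `(α, N)`, then so is `L`. -/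
theorem majorization_TFF {K K' N : ℕ} (α : ℝ)
    (L : Fin K → ℕ) (L' : Fin K' → ℕ)
    (hL : Antitone L) (hLpos : ∀ i, 0 < L i)
    (hL' : Antitone L') (hL'pos : ∀ i, 0 < L' i)
    (hmaj : Majorizes L L')
    (h : IsTFF N α L') :
    IsTFF N α L :=
  majorization_TFF_general α L L' hL hmaj h
end

section
/- If (L_1, L_2, …, L_K) ∈ TFF(α, N), then (N−L_K, N−L_{K−1}, …, N−L_1) ∈ TFF(K−α, N) (where any zero entries are discarded). -/
open Matrix

/-- The range of `1 - P` is the kernel of `P`, so rank–nullity for `P` gives the rank. -/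
theorem Matrix.rank_one_sub_of_isIdempotentElem {n 𝕜 : Type*} [Fintype n] [DecidableEq n]
    [Field 𝕜] {P : Matrix n n 𝕜} (hP : IsIdempotentElem P) :
    (1 - P).rank = Fintype.card n - P.rank := by
  have hP' : IsIdempotentElem (toLin' P) := hP.map toLinAlgEquiv'
  have hker : (1 - P).rank = Module.finrank 𝕜 (LinearMap.ker (toLin' P)) := by
    rw [LinearMap.IsIdempotentElem.ker_eq_range_one_sub hP', rank, ← toLin'_apply', map_sub,
      toLin'_one]
    rfl
  have rank_nullity := LinearMap.finrank_range_add_finrank_ker (toLin' P)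
  rw [Module.finrank_fintype_fun_eq_card] at rank_nullity
  rw [hker, rank, ← toLin'_apply']
  omega

namespace IsTFF

variable {N K : ℕ} {α : ℝ} {L : Fin K → ℕ}

theorem comp_perm (h : IsTFF N α L) (σ : Equiv.Perm (Fin K)) : IsTFF N α (L ∘ σ) := by
  obtain ⟨P, hidem, hsymm, hrank, hsum⟩ := h
  refine ⟨P ∘ σ, fun i => hidem (σ i), fun i => hsymm (σ i), fun i => hrank (σ i), ?_⟩
  rw [← hsum]
  exact Equiv.sum_comp σ P

theorem complement (h : IsTFF N α L) : IsTFF N ((K : ℝ) - α) (fun i => N - L i) := by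
  obtain ⟨P, hidem, hsymm, hrank, hsum⟩ := h
  refine ⟨fun i => 1 - P i, fun i => (IsIdempotentElem.one_sub (hidem i)).eq,
    fun i => by rw [transpose_sub, transpose_one, hsymm], fun i => ?_, ?_⟩
  · rw [rank_one_sub_of_isIdempotentElem (hidem i), hrank, Fintype.card_fin]
  · rw [Finset.sum_sub_distrib, hsum, Finset.sum_const, Finset.card_univ, Fintype.card_fin,
      sub_smul, Nat.cast_smul_eq_nsmul]

end IsTFF

theorem spatial_duality_general {K N : ℕ} (α : ℝ) (L : Fin K → ℕ)
    (h : IsTFF N α L) :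
    IsTFF N ((K : ℝ) - α) (fun i : Fin K => N - L (Fin.rev i)) :=
  h.complement.comp_perm Fin.revPerm

/-- Spatial duality: if `(L_1, …, L_K) ∈ TFF(α, N)` then
`(N - L_K, …, N - L_1) ∈ TFF(K - α, N)` (any zero entries being discarded). -/
theorem spatial_duality {K N : ℕ} (α : ℝ) (L : Fin K → ℕ)
    (hL : Antitone L) (hpos : ∀ i, 0 < L i)
    (h : IsTFF N α L) :
    IsTFF N ((K : ℝ) - α) (fun i : Fin K => N - L (Fin.rev i)) :=
  spatial_duality_general α L h
end

section
/- Suppose (L_1, L_2, …, L_K) ∈ TFF(α, N) with α > 1. Then the same sequence satisfies (L_1, L_2, …, L_K) ∈ TFF(α̃, Ñ), where Ñ = (Σ_{i=1}^K L_i) − N and α̃ = α/(α−1) = αN/Ñ. -/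
/-!
Encode a tight fusion frame by its synthesis matrix `T : ℝ^{ΣLᵢ} → ℝ^N`, obtained by stacking
isometries `Tᵢ` with `Tᵢ Tᵢᵀ = Pᵢ`, so that `T Tᵀ = α` and `Tᵢᵀ Tᵢ = 1`. Then
`Q = 1 - α⁻¹ TᵀT` is the projection onto the orthogonal complement of the row space of `T`; it has
rank `ΣLᵢ - N` and factors as `Q = SᵀS` with `S Sᵀ = 1`. The diagonal blocks of `Q` are
`1 - α⁻¹ TᵢᵀTᵢ = (1 - α⁻¹)`, so the blocks `Sᵢ` of `S` are isometries up to the factor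
`1 - α⁻¹`, and `Sᵢ Sᵢᵀ / (1 - α⁻¹)` are projections of rank `Lᵢ` summing to `α/(α-1)`.
-/

open Matrix

namespace Matrix

theorem trace_eq_rank_of_isIdempotentElem_s3 {n K : Type*} [Fintype n] [DecidableEq n] [Field K]
    {P : Matrix n n K} (hP : IsIdempotentElem P) : P.trace = P.rank := by
  have hP' : IsIdempotentElem (toLin' P) := hP.map toLinAlgEquiv'
  rw [← trace_toLin'_eq, (LinearMap.IsIdempotentElem.isProj_range _ hP').trace]
  rfl

theorem IsHermitian.eigenvalues_eq_one_of_isIdempotentElem {n : Type*} [Fintype n] [DecidableEq n]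
    {P : Matrix n n ℝ} (hH : P.IsHermitian) (hP : IsIdempotentElem P) {k : n}
    (hk : hH.eigenvalues k ≠ 0) : hH.eigenvalues k = 1 := by
  simpa [hk] using hP.spectrum_subset ℝ (hH.eigenvalues_mem_spectrum_real k)

theorem exists_mul_transpose_eq_of_isIdempotentElem {n : Type*} [Fintype n] [DecidableEq n]
    {P : Matrix n n ℝ} (hP : IsIdempotentElem P) (hsymm : P.IsSymm) :
    ∃ B : Matrix n (Fin P.rank) ℝ, Bᵀ * B = 1 ∧ B * Bᵀ = P := by
  have hH : P.IsHermitian := isHermitian_iff_isSymm.mpr hsymm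
  set U : Matrix n n ℝ := (hH.eigenvectorUnitary : Matrix n n ℝ)
  set μ := hH.eigenvalues
  have hUU : Uᵀ * U = 1 := by
    simpa [star_eq_conjTranspose] using mem_unitaryGroup_iff'.mp hH.eigenvectorUnitary.2
  have hPU : P = U * diagonal μ * Uᵀ := by
    simpa [Unitary.conjStarAlgAut_apply, Function.comp_def, star_eq_conjTranspose]
      using hH.spectral_theorem
  have hP_apply (j l : n) : P j l = ∑ k : {k // μ k ≠ 0}, U j k * U l k := by
    rw [hPU, mul_apply]
    simp only [mul_diagonal, transpose_apply]
    rw [← Fintype.sum_subtype_add_sum_subtype (fun k => μ k ≠ 0)]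
    have h1 (k : {k // μ k ≠ 0}) : μ k = 1 := hH.eigenvalues_eq_one_of_isIdempotentElem hP k.2
    have h0 (k : {k // ¬μ k ≠ 0}) : μ k = 0 := not_not.mp k.2
    simp [h1, h0]
  obtain ⟨e⟩ : Nonempty (Fin P.rank ≃ {k // μ k ≠ 0}) :=
    ⟨Fintype.equivFinOfCardEq hH.rank_eq_card_non_zero_eigs.symm |>.symm⟩
  have he : Function.Injective (Subtype.val ∘ e) := Subtype.val_injective.comp e.injective
  -- the columns of `B` are the eigenvectors of `P` with eigenvalue `1`
  refine ⟨U.submatrix id (Subtype.val ∘ e), ?_, ?_⟩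
  · rw [transpose_submatrix, ← submatrix_mul _ _ _ _ _ Function.bijective_id, hUU,
      submatrix_one _ he]
  · ext j l
    rw [hP_apply, mul_apply, ← e.sum_comp]
    rfl

theorem mul_eq_sum_submatrix_sigma {l n ι R : Type*} [Fintype ι] {κ : ι → Type*}
    [∀ i, Fintype (κ i)] [NonUnitalNonAssocSemiring R]
    (X : Matrix l (Σ i, κ i) R) (Y : Matrix (Σ i, κ i) n R) :
    X * Y = ∑ i, X.submatrix id (Sigma.mk i) * Y.submatrix (Sigma.mk i) id := by
  ext a b
  simp [mul_apply, sum_apply, Fintype.sum_sigma]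

theorem submatrix_transpose_mul_self {m n p R : Type*} [Fintype m] [NonUnitalNonAssocSemiring R]
    (X : Matrix m n R) (f : p → n) :
    (Xᵀ * X).submatrix f f = (X.submatrix id f)ᵀ * X.submatrix id f := by
  rw [transpose_submatrix, ← submatrix_mul _ _ _ _ _ Function.bijective_id]

section ScaledIsometry

variable {m n K : Type*} [Fintype m] [Fintype n] [DecidableEq n] [Field K]
  {X : Matrix m n K} {β : K}

theorem isIdempotentElem_inv_smul_mul_transpose (hβ : β ≠ 0) (hX : Xᵀ * X = β • 1) :
    IsIdempotentElem (β⁻¹ • (X * Xᵀ)) := by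
  have hassoc : X * Xᵀ * (X * Xᵀ) = X * (Xᵀ * X) * Xᵀ := by simp only [Matrix.mul_assoc]
  rw [IsIdempotentElem, smul_mul_smul, hassoc, hX, Matrix.mul_smul, Matrix.smul_mul,
    Matrix.mul_one, smul_smul, inv_mul_cancel_right₀ hβ]

theorem trace_inv_smul_mul_transpose (hβ : β ≠ 0) (hX : Xᵀ * X = β • 1) :
    (β⁻¹ • (X * Xᵀ)).trace = Fintype.card n := by
  rw [trace_smul, trace_mul_comm, hX, trace_smul, trace_one, smul_smul, inv_mul_cancel₀ hβ,
    one_smul]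

theorem rank_inv_smul_mul_transpose [DecidableEq m] [CharZero K] (hβ : β ≠ 0)
    (hX : Xᵀ * X = β • 1) : (β⁻¹ • (X * Xᵀ)).rank = Fintype.card n := by
  have h := trace_eq_rank_of_isIdempotentElem_s3 (isIdempotentElem_inv_smul_mul_transpose hβ hX)
  rw [trace_inv_smul_mul_transpose hβ hX] at h
  exact_mod_cast h.symm

end ScaledIsometry

end Matrix

theorem exists_naimark_complement {m n : Type*} [Fintype m] [Fintype n] [DecidableEq m]
    [DecidableEq n] {α : ℝ} (hα : α ≠ 0) (T : Matrix n m ℝ) (hT : T * Tᵀ = α • 1) :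
    ∃ S : Matrix (Fin (Fintype.card m - Fintype.card n)) m ℝ,
      S * Sᵀ = 1 ∧ Sᵀ * S = 1 - α⁻¹ • (Tᵀ * T) := by
  have hTT : Tᵀᵀ * Tᵀ = α • 1 := by rwa [transpose_transpose]
  have htrace := trace_inv_smul_mul_transpose hα hTT
  rw [transpose_transpose] at htrace
  set Q : Matrix m m ℝ := 1 - α⁻¹ • (Tᵀ * T)
  have hQ : IsIdempotentElem Q := by
    have := (isIdempotentElem_inv_smul_mul_transpose hα hTT).one_sub
    rwa [transpose_transpose] at this
  have hQsymm : Q.IsSymm := by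
    simp [Q, IsSymm, transpose_sub, transpose_smul, transpose_mul]
  have hrank : Q.rank = Fintype.card m - Fintype.card n := by
    have : (Q.rank + Fintype.card n : ℝ) = Fintype.card m := by
      rw [← trace_eq_rank_of_isIdempotentElem_s3 hQ, trace_sub, trace_one, htrace]
      ring
    have : Q.rank + Fintype.card n = Fintype.card m := by exact_mod_cast this
    omega
  obtain ⟨B, hBB, hBQ⟩ : ∃ B : Matrix m (Fin (Fintype.card m - Fintype.card n)) ℝ,
      Bᵀ * B = 1 ∧ B * Bᵀ = Q :=
    hrank ▸ exists_mul_transpose_eq_of_isIdempotentElem hQ hQsymm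
  exact ⟨Bᵀ, hBB, by rwa [transpose_transpose]⟩

theorem IsTFF.exists_synthesis {N K : ℕ} {α : ℝ} {L : Fin K → ℕ} (h : IsTFF N α L) :
    ∃ T : Matrix (Fin N) (Σ i, Fin (L i)) ℝ, T * Tᵀ = α • 1 ∧
      ∀ i, (T.submatrix id (Sigma.mk i))ᵀ * T.submatrix id (Sigma.mk i) = 1 := by
  obtain ⟨P, hidem, hsymm, hrank, hsum⟩ := h
  have (i : Fin K) : ∃ B : Matrix (Fin N) (Fin (L i)) ℝ, Bᵀ * B = 1 ∧ B * Bᵀ = P i :=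
    hrank i ▸ exists_mul_transpose_eq_of_isIdempotentElem (hidem i) (hsymm i)
  choose B hBB hBP using this
  refine ⟨of fun k p => B p.1 k p.2, ?_, hBB⟩
  rw [mul_eq_sum_submatrix_sigma, ← hsum]
  simp_rw [← transpose_submatrix]
  exact Finset.sum_congr rfl fun i _ => hBP i

theorem isTFF_of_synthesis {N K : ℕ} {α β : ℝ} {L : Fin K → ℕ} (hβ : β ≠ 0)
    (T : Matrix (Fin N) (Σ i, Fin (L i)) ℝ) (hT : T * Tᵀ = α • 1)
    (hblock : ∀ i, (T.submatrix id (Sigma.mk i))ᵀ * T.submatrix id (Sigma.mk i) = β • 1) :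
    IsTFF N (α / β) L := by
  refine ⟨fun i => β⁻¹ • (T.submatrix id (Sigma.mk i) * (T.submatrix id (Sigma.mk i))ᵀ),
    fun i => isIdempotentElem_inv_smul_mul_transpose hβ (hblock i), fun i => ?_,
    fun i => by simpa using rank_inv_smul_mul_transpose hβ (hblock i), ?_⟩
  · simp [transpose_smul, transpose_mul]
  · simp_rw [← Finset.smul_sum, transpose_submatrix]
    rw [← mul_eq_sum_submatrix_sigma, hT, smul_smul, div_eq_inv_mul]

theorem naimark_duality_general {K N : ℕ} (α : ℝ) (hα : 1 < α) (L : Fin K → ℕ) (h : IsTFF N α L) :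
    IsTFF ((∑ i, L i) - N) (α / (α - 1)) L := by
  obtain ⟨T, hT, hblock⟩ := h.exists_synthesis
  obtain ⟨S, hS, hSQ⟩ := exists_naimark_complement (by positivity) T hT
  have hSblock (i : Fin K) :
      (S.submatrix id (Sigma.mk i))ᵀ * S.submatrix id (Sigma.mk i) = (1 - α⁻¹) • 1 := by
    rw [← submatrix_transpose_mul_self, hSQ]
    simp only [submatrix_sub, submatrix_smul, Pi.sub_apply, Pi.smul_apply]
    rw [submatrix_transpose_mul_self, hblock, submatrix_one _ sigma_mk_injective, sub_smul,
      one_smul]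
  have hβ : 1 - α⁻¹ ≠ 0 := sub_ne_zero.mpr (inv_lt_one_of_one_lt₀ hα).ne'
  convert isTFF_of_synthesis hβ S (by rw [hS, one_smul]) hSblock using 1
  · simp
  · field_simp

/-- Naimark duality: if `(L_1, …, L_K) ∈ TFF(α, N)` with `α > 1`, then the same sequence
belongs to `TFF(α/(α-1), Ñ)` where `Ñ = (Σᵢ Lᵢ) - N`. -/
theorem naimark_duality {K N : ℕ} (α : ℝ) (hα : 1 < α)
    (L : Fin K → ℕ) (hL : Antitone L) (hpos : ∀ i, 0 < L i)
    (h : IsTFF N α L) :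
    IsTFF ((∑ i, L i) - N) (α / (α - 1)) L :=
  naimark_duality_general α hα L h
end

section
/- Let P and Q be orthogonal projections on an N-dimensional real inner product space V with ranks p and q respectively, and for λ ∈ ℝ let m(λ) be the multiplicity of λ as an eigenvalue of P+Q (with m(λ) = 0 if λ is not an eigenvalue). Then: (i) m(λ) > 0 implies λ ∈ [0,2]; (ii) Σ_{λ ∈ [0,2]} m(λ) = N; (iii) m(1) ≥ |p−q|; (iv) for every λ ∈ (0,2), m(λ) = m(2−λ); (v) m(0) − m(2) = N − p − q. -/
/-!
Since `⟪(P + Q) x, x⟫ = ‖P x‖² + ‖Q x‖²`, the eigenvalues of `P + Q` are nonnegative and its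
`0`-eigenspace is `ker P ⊓ ker Q = (range P ⊔ range Q)ᗮ`. Replacing `P, Q` by the projections
`1 - P, 1 - Q` replaces `P + Q` by `2 - (P + Q)`: this bounds the eigenvalues by `2` and identifies
the `2`-eigenspace with `range P ⊓ range Q`, which gives (i) and, by a dimension count, (v).
The anticommutator identity `(P + Q)(P - Q) + (P - Q)(P + Q) = 2 (P - Q)` shows that `P - Q` maps
the `μ`-eigenspace into the `(2 - μ)`-eigenspace, injectively unless `μ ∈ {0, 2}`, hence (iv).
For (iii), `range P ⊓ ker Q` lies in the `1`-eigenspace, and (ii) is the spectral theorem.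
-/

open Module Module.End LinearMap

section Idempotent

variable {K V : Type*} [Field K] [AddCommGroup V] [Module K V] {P Q : Module.End K V}

theorem eigenspace_one_sub_add_one_sub (P Q : Module.End K V) (μ : K) :
    eigenspace ((1 - P) + (1 - Q)) (2 - μ) = eigenspace (P + Q) μ := by
  ext x
  simp only [mem_eigenspace_iff, LinearMap.add_apply, LinearMap.sub_apply, one_apply]
  rw [← sub_eq_zero, ← neg_eq_zero, ← sub_eq_zero (a := P x + Q x)]
  constructor <;> intro h <;> rw [← h] <;> module

theorem range_inf_ker_le_eigenspace_add_one (hP : IsIdempotentElem P) (Q : Module.End K V) :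
    range P ⊓ ker Q ≤ eigenspace (P + Q) 1 := by
  rintro x ⟨hxP, hxQ⟩
  rw [SetLike.mem_coe, hP.mem_range_iff] at hxP
  rw [mem_eigenspace_iff, LinearMap.add_apply, hxP, mem_ker.mp hxQ, add_zero, one_smul]

theorem sub_apply_mem_eigenspace_add (hP : IsIdempotentElem P) (hQ : IsIdempotentElem Q) {μ : K}
    {x : V} (hx : x ∈ eigenspace (P + Q) μ) : (P - Q) x ∈ eigenspace (P + Q) (2 - μ) := by
  rw [mem_eigenspace_iff, LinearMap.add_apply] at hx
  have hPx := congrArg P hx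
  have hQx := congrArg Q hx
  rw [map_add, map_smul, ← mul_apply P P, hP.eq] at hPx
  rw [map_add, map_smul, ← mul_apply Q Q, hQ.eq] at hQx
  rw [mem_eigenspace_iff, LinearMap.add_apply, LinearMap.sub_apply, map_sub, map_sub,
    ← mul_apply P P, hP.eq, ← mul_apply Q Q, hQ.eq]
  linear_combination (norm := module) hQx - hPx

theorem eq_zero_of_mem_eigenspace_add_of_apply_eq (hP : IsIdempotentElem P) {μ : K}
    (hμ0 : μ ≠ 0) (hμ2 : μ ≠ 2) {x : V} (hx : x ∈ eigenspace (P + Q) μ) (hPQ : P x = Q x) :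
    x = 0 := by
  rw [mem_eigenspace_iff, LinearMap.add_apply, ← hPQ] at hx
  have hPx : P x = x := by
    have h := congrArg P hx
    rw [map_add, map_smul, ← mul_apply, hP.eq, hx] at h
    exact smul_right_injective V hμ0 h.symm
  rw [hPx] at hx
  have h : (2 - μ) • x = 0 := by rw [sub_smul, two_smul, hx, sub_self]
  exact (smul_eq_zero.mp h).resolve_left (sub_ne_zero.mpr hμ2.symm)

variable [FiniteDimensional K V]

theorem finrank_range_sub_le_finrank_eigenspace_add_one (hP : IsIdempotentElem P)
    (Q : Module.End K V) :
    (finrank K (range P) : ℤ) - finrank K (range Q) ≤ finrank K (eigenspace (P + Q) 1) := by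
  have h1 := Submodule.finrank_sup_add_finrank_inf_eq (range P) (ker Q)
  have h2 := finrank_range_add_finrank_ker Q
  have h3 := Submodule.finrank_le (range P ⊔ ker Q)
  have h4 := Submodule.finrank_mono (range_inf_ker_le_eigenspace_add_one hP Q)
  omega

theorem abs_finrank_range_sub_le_finrank_eigenspace_add_one (hP : IsIdempotentElem P)
    (hQ : IsIdempotentElem Q) :
    |(finrank K (range P) : ℤ) - finrank K (range Q)| ≤ finrank K (eigenspace (P + Q) 1) := by
  rw [abs_sub_le_iff]
  exact ⟨finrank_range_sub_le_finrank_eigenspace_add_one hP Q,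
    add_comm P Q ▸ finrank_range_sub_le_finrank_eigenspace_add_one hQ P⟩

theorem finrank_eigenspace_add_le_two_sub (hP : IsIdempotentElem P) (hQ : IsIdempotentElem Q)
    {μ : K} (hμ0 : μ ≠ 0) (hμ2 : μ ≠ 2) :
    finrank K (eigenspace (P + Q) μ) ≤ finrank K (eigenspace (P + Q) (2 - μ)) := by
  refine finrank_le_finrank_of_injective
    (f := (P - Q).restrict fun _ hx ↦ sub_apply_mem_eigenspace_add hP hQ hx) ?_
  rw [← ker_eq_bot, ker_eq_bot']
  rintro ⟨x, hx⟩ h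
  have hPQ : (P - Q) x = 0 := congrArg Subtype.val h
  exact Subtype.ext (eq_zero_of_mem_eigenspace_add_of_apply_eq hP hμ0 hμ2 hx (sub_eq_zero.mp hPQ))

theorem finrank_eigenspace_add_eq_two_sub (hP : IsIdempotentElem P) (hQ : IsIdempotentElem Q)
    {μ : K} (hμ0 : μ ≠ 0) (hμ2 : μ ≠ 2) :
    finrank K (eigenspace (P + Q) μ) = finrank K (eigenspace (P + Q) (2 - μ)) := by
  refine (finrank_eigenspace_add_le_two_sub hP hQ hμ0 hμ2).antisymm ?_
  have h := finrank_eigenspace_add_le_two_sub hP hQ (sub_ne_zero.mpr hμ2.symm) (by simpa using hμ0)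
  rwa [sub_sub_cancel] at h

end Idempotent

theorem LinearMap.IsSymmetric.finsum_finrank_eigenspace {𝕜 E : Type*} [RCLike 𝕜]
    [NormedAddCommGroup E] [InnerProductSpace 𝕜 E] [FiniteDimensional 𝕜 E] {T : E →ₗ[𝕜] E}
    (hT : T.IsSymmetric) : ∑ᶠ μ, finrank 𝕜 (eigenspace T μ) = finrank 𝕜 E := by
  classical
  let val : Eigenvalues T ↪ 𝕜 := ⟨Eigenvalues.val T, Subtype.val_injective⟩
  rw [finsum_eq_sum_of_support_subset _ (s := Finset.univ.map val), Finset.sum_map,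
    ← finrank_directSum]
  · exact (LinearEquiv.ofBijective (DirectSum.coeLinearMap _) hT.direct_sum_isInternal).finrank_eq
  intro μ hμ
  rw [Function.mem_support, Ne, Submodule.finrank_eq_zero, ← Ne, ← hasEigenvalue_iff] at hμ
  simp only [Finset.coe_map, Finset.coe_univ, Set.image_univ]
  exact ⟨⟨μ, hμ⟩, rfl⟩

namespace LinearMap.IsSymmetricProjection

variable {𝕜 E : Type*} [RCLike 𝕜] [NormedAddCommGroup E] [InnerProductSpace 𝕜 E]
  {P Q : E →ₗ[𝕜] E}

theorem one_sub (hP : P.IsSymmetricProjection) : (1 - P).IsSymmetricProjection :=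
  ⟨hP.isIdempotentElem.one_sub, IsSymmetric.one.sub hP.isSymmetric⟩

theorem re_inner_apply_self (hP : P.IsSymmetricProjection) (x : E) :
    RCLike.re (inner 𝕜 (P x) x) = ‖P x‖ ^ 2 := by
  conv_lhs => rw [← hP.isIdempotentElem.eq]
  rw [mul_apply, hP.isSymmetric]
  exact inner_self_eq_norm_sq _

theorem eigenspace_add_zero (hP : P.IsSymmetricProjection) (hQ : Q.IsSymmetricProjection) :
    eigenspace (P + Q) 0 = ker P ⊓ ker Q := by
  refine le_antisymm (fun x hx ↦ ?_) fun x ⟨hPx, hQx⟩ ↦ ?_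
  · rw [eigenspace_zero, mem_ker, LinearMap.add_apply] at hx
    have h : ‖P x‖ ^ 2 + ‖Q x‖ ^ 2 = 0 := by
      rw [← hP.re_inner_apply_self, ← hQ.re_inner_apply_self, ← map_add, ← inner_add_left, hx,
        inner_zero_left, map_zero]
    have hPx : ‖P x‖ = 0 := by nlinarith [norm_nonneg (P x), norm_nonneg (Q x)]
    have hQx : ‖Q x‖ = 0 := by nlinarith [norm_nonneg (P x), norm_nonneg (Q x)]
    exact ⟨norm_eq_zero.mp hPx, norm_eq_zero.mp hQx⟩
  · rw [eigenspace_zero, mem_ker, LinearMap.add_apply, mem_ker.mp hPx, mem_ker.mp hQx, add_zero]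

theorem eigenspace_add_two (hP : P.IsSymmetricProjection) (hQ : Q.IsSymmetricProjection) :
    eigenspace (P + Q) 2 = range P ⊓ range Q := by
  rw [← eigenspace_one_sub_add_one_sub, sub_self, hP.one_sub.eigenspace_add_zero hQ.one_sub,
    ← hP.isIdempotentElem.range_eq_ker_one_sub, ← hQ.isIdempotentElem.range_eq_ker_one_sub]

theorem nonneg_of_hasEigenvalue_add (hP : P.IsSymmetricProjection) (hQ : Q.IsSymmetricProjection)
    {μ : ℝ} (h : HasEigenvalue (P + Q) μ) : 0 ≤ μ :=
  eigenvalue_nonneg_of_nonneg h (hP.isPositive.add hQ.isPositive).re_inner_nonneg_right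

theorem mem_Icc_of_hasEigenvalue_add (hP : P.IsSymmetricProjection)
    (hQ : Q.IsSymmetricProjection) {μ : ℝ} (h : HasEigenvalue (P + Q) μ) : μ ∈ Set.Icc 0 2 := by
  refine ⟨hP.nonneg_of_hasEigenvalue_add hQ h, sub_nonneg.mp ?_⟩
  refine hP.one_sub.nonneg_of_hasEigenvalue_add hQ.one_sub ?_
  rwa [hasEigenvalue_iff, RCLike.ofReal_sub, RCLike.ofReal_ofNat, eigenspace_one_sub_add_one_sub,
    ← hasEigenvalue_iff]

theorem finrank_eigenspace_add_zero_sub_two [FiniteDimensional 𝕜 E]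
    (hP : P.IsSymmetricProjection) (hQ : Q.IsSymmetricProjection) :
    (finrank 𝕜 (eigenspace (P + Q) 0) : ℤ) - finrank 𝕜 (eigenspace (P + Q) 2) =
      finrank 𝕜 E - finrank 𝕜 (range P) - finrank 𝕜 (range Q) := by
  rw [hP.eigenspace_add_zero hQ, hP.eigenspace_add_two hQ, ← hP.isSymmetric.orthogonal_range,
    ← hQ.isSymmetric.orthogonal_range, Submodule.inf_orthogonal]
  have h1 := Submodule.finrank_add_finrank_orthogonal (range P ⊔ range Q)
  have h2 := Submodule.finrank_sup_add_finrank_inf_eq (range P) (range Q)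
  omega

end LinearMap.IsSymmetricProjection

/-- Eigenvalue multiplicities of a sum of two orthogonal projections on an
`N`-dimensional real inner product space. -/
theorem mult_sum_two_projections
    {V : Type*} [NormedAddCommGroup V] [InnerProductSpace ℝ V] [FiniteDimensional ℝ V]
    (N p q : ℕ) (hdim : Module.finrank ℝ V = N)
    (P Q : V →ₗ[ℝ] V)
    (hP2 : P ∘ₗ P = P) (hPsym : P.IsSymmetric)
    (hQ2 : Q ∘ₗ Q = Q) (hQsym : Q.IsSymmetric)
    (hp : Module.finrank ℝ (LinearMap.range P) = p)
    (hq : Module.finrank ℝ (LinearMap.range Q) = q)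
    (m : ℝ → ℕ)
    (hm : ∀ μ : ℝ, m μ = Module.finrank ℝ (Module.End.eigenspace (P + Q) μ)) :
    (∀ μ : ℝ, 0 < m μ → μ ∈ Set.Icc (0 : ℝ) 2) ∧
    (∑ᶠ μ ∈ Set.Icc (0 : ℝ) 2, m μ = N) ∧
    (|(p : ℤ) - (q : ℤ)| ≤ (m 1 : ℤ)) ∧
    (∀ μ ∈ Set.Ioo (0 : ℝ) 2, m μ = m (2 - μ)) ∧
    ((m 0 : ℤ) - (m 2 : ℤ) = (N : ℤ) - p - q) := by
  have hP : P.IsSymmetricProjection := ⟨hP2, hPsym⟩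
  have hQ : Q.IsSymmetricProjection := ⟨hQ2, hQsym⟩
  obtain rfl : m = fun μ ↦ finrank ℝ (eigenspace (P + Q) μ) := funext hm
  subst hdim hp hq
  have hspec (μ : ℝ) (hμ : 0 < finrank ℝ (eigenspace (P + Q) μ)) : μ ∈ Set.Icc (0 : ℝ) 2 :=
    hP.mem_Icc_of_hasEigenvalue_add hQ
      (hasEigenvalue_iff.mpr (Submodule.finrank_eq_zero.not.mp hμ.ne'))
  refine ⟨hspec, ?_, abs_finrank_range_sub_le_finrank_eigenspace_add_one hP2 hQ2,
    fun μ hμ ↦ finrank_eigenspace_add_eq_two_sub hP2 hQ2 hμ.1.ne' hμ.2.ne,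
    hP.finrank_eigenspace_add_zero_sub_two hQ⟩
  rw [finsum_mem_inter_support_eq' _ _ Set.univ
      fun μ hμ ↦ iff_of_true (hspec μ (Nat.pos_of_ne_zero hμ)) trivial,
    finsum_mem_univ, (hPsym.add hQsym).finsum_finrank_eigenspace]
end

section
/- Let n be a positive integer and N an even positive integer, and set α = n + 1/2. Then the sequence L = (N, …, N, N/2, N/2, N/2), consisting of n−1 copies of N followed by three copies of N/2, belongs to TFF(α, N), and every sequence L' ∈ TFF(α, N) satisfies L' ≼ L. In particular, L is the unique maximal element of TFF(α, N) with respect to majorization. -/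
open Matrix

/-!
The extremal sequence is realised by `n - 1` copies of the identity together with the
Mercedes-Benz frame of `ℝ²` tensored with the identity of `ℝ^(N/2)`.

For maximality, let `∑ Pᵢ = α • 1` and let `s` be a set of fewer than `α` indices. Then
`∑_{i ∉ s} Pᵢ = (α - #s) • 1 + ∑_{i ∈ s} (1 - Pᵢ)` is positive definite, so the ranks outside
`s` add up to at least `N`. The projections `1 - Pᵢ` form a tight fusion frame with bound
`K - α`, and the same bound for them gives `∑_{i ∈ s} Lᵢ ≤ (#s - 1) N` whenever `#s > α`.
For `α = n + 1/2` these two bounds control the partial sums at `k = n` and `k = n + 1`;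
the bound `Lᵢ ≤ N` and `∑ Lᵢ = α N` control the others.
-/

open scoped Kronecker

namespace Matrix

variable {n : Type*} [Fintype n] {R : Type*} [Field R]

theorem rank_add_le {m : Type*} (A B : Matrix m n R) : (A + B).rank ≤ A.rank + B.rank := by
  have h : LinearMap.range (A + B).mulVecLin ≤
      LinearMap.range A.mulVecLin ⊔ LinearMap.range B.mulVecLin := by
    rintro x ⟨y, rfl⟩
    rw [mulVecLin_add]
    exact Submodule.add_mem_sup (LinearMap.mem_range_self _ y) (LinearMap.mem_range_self _ y)
  exact (Submodule.finrank_mono h).trans (Submodule.finrank_add_le_finrank_add_finrank _ _)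

theorem rank_sum_le {ι m : Type*} (s : Finset ι) (A : ι → Matrix m n R) :
    (∑ i ∈ s, A i).rank ≤ ∑ i ∈ s, (A i).rank :=
  Finset.le_sum_of_subadditive (fun M : Matrix m n R => M.rank) rank_zero.le rank_add_le s A

theorem PosDef.card_le_sum_rank [DecidableEq n] [PartialOrder R] [StarRing R] {ι : Type*}
    {s : Finset ι} {A : ι → Matrix n n R}
    (h : (∑ i ∈ s, A i).PosDef) : Fintype.card n ≤ ∑ i ∈ s, (A i).rank := by
  rw [← rank_of_isUnit _ h.isUnit]
  exact rank_sum_le s A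

theorem rank_eq_trace_of_isIdempotentElem [DecidableEq n] {P : Matrix n n R}
    (h : IsIdempotentElem P) : (P.rank : R) = P.trace := by
  have hproj : LinearMap.IsProj (LinearMap.range P.mulVecLin) P.mulVecLin := by
    refine ⟨LinearMap.mem_range_self _, ?_⟩
    rintro _ ⟨y, rfl⟩
    rw [← LinearMap.comp_apply, ← mulVecLin_mul, h.eq]
  rw [rank, ← hproj.trace, LinearMap.trace_eq_matrix_trace R (Pi.basisFun R n),
    LinearMap.toMatrix_eq_toMatrix', ← toLin'_apply', LinearMap.toMatrix'_toLin']

theorem rank_one_sub_add_rank_of_isIdempotentElem [DecidableEq n] [CharZero R]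
    {P : Matrix n n R} (h : IsIdempotentElem P) : (1 - P).rank + P.rank = Fintype.card n := by
  have := rank_eq_trace_of_isIdempotentElem h.one_sub
  rw [trace_sub, trace_one, ← rank_eq_trace_of_isIdempotentElem h] at this
  exact_mod_cast (eq_sub_iff_add_eq.mp this)

theorem posSemidef_of_isIdempotentElem_of_transpose_eq {P : Matrix n n ℝ}
    (h : IsIdempotentElem P) (hs : Pᵀ = P) : P.PosSemidef := by
  simpa only [conjTranspose_eq_transpose_of_trivial, hs, h.eq] using
    posSemidef_conjTranspose_mul_self P

end Matrix

theorem Fin.sum_filter_val_lt_eq_sum_range {M : Type*} [AddCommMonoid M] {K k : ℕ}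
    (hk : k ≤ K) (f : ℕ → M) : ∑ i ∈ Finset.univ.filter (fun i : Fin K => (i : ℕ) < k), f i =
      ∑ j ∈ Finset.range k, f j := by
  rw [Finset.sum_filter, Fin.sum_univ_eq_sum_range (fun j => if j < k then f j else 0),
    ← Finset.sum_filter]
  congr 1
  ext j
  simp only [Finset.mem_filter, Finset.mem_range]
  omega

theorem Finset.sum_range_ite_lt (a b t k : ℕ) :
    ∑ j ∈ Finset.range k, (if j < t then a else b) = min k t * a + (k - t) * b := by
  induction k with
  | zero => simp
  | succ k ih =>
    rw [Finset.sum_range_succ, ih]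
    rcases lt_or_ge k t with hkt | hkt
    · rw [if_pos hkt, min_eq_left hkt.le, min_eq_left hkt, Nat.sub_eq_zero_of_le hkt,
        Nat.sub_eq_zero_of_le hkt.le]
      ring
    · rw [if_neg hkt.not_gt, min_eq_right hkt, min_eq_right (hkt.trans k.le_succ),
        Nat.sub_add_comm hkt]
      ring

namespace IsTFF

variable {N K : ℕ} {α : ℝ} {L : Fin K → ℕ}

theorem le_dim (h : IsTFF N α L) (i : Fin K) : L i ≤ N := by
  obtain ⟨P, -, -, hrank, -⟩ := h
  simpa [hrank] using (P i).rank_le_card_width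

theorem sum_eq (h : IsTFF N α L) : (∑ i, L i : ℝ) = α * N := by
  obtain ⟨P, hidem, -, hrank, hsum⟩ := h
  calc (∑ i, L i : ℝ) = ∑ i, (P i).trace := by
        simp only [← hrank, Matrix.rank_eq_trace_of_isIdempotentElem (hidem _)]
    _ = α * N := by simp [← Matrix.trace_sum, hsum]

theorem compl (h : IsTFF N α L) : IsTFF N (K - α) (fun i => N - L i) := by
  obtain ⟨P, hidem, hsym, hrank, hsum⟩ := h
  refine ⟨fun i => 1 - P i, fun i => IsIdempotentElem.one_sub (hidem i), fun i => by simp [hsym i],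
    fun i => ?_, ?_⟩
  · have := Matrix.rank_one_sub_add_rank_of_isIdempotentElem (hidem i)
    simp only [Fintype.card_fin, hrank] at this
    show (1 - P i).rank = N - L i
    omega
  · rw [Finset.sum_sub_distrib, hsum, sub_smul, Finset.sum_const, Finset.card_univ,
      Fintype.card_fin, Nat.cast_smul_eq_nsmul]

theorem comp_equiv (h : IsTFF N α L) {K' : ℕ} (e : Fin K' ≃ Fin K) : IsTFF N α (L ∘ e) := by
  obtain ⟨P, hidem, hsym, hrank, hsum⟩ := h
  exact ⟨P ∘ e, fun i => hidem (e i), fun i => hsym (e i), fun i => hrank (e i),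
    by rw [← hsum]; exact e.sum_comp P⟩

theorem append (h : IsTFF N α L) {K' : ℕ} {β : ℝ} {L' : Fin K' → ℕ} (h' : IsTFF N β L') :
    IsTFF N (α + β) (Fin.append L L') := by
  obtain ⟨P, hidem, hsym, hrank, hsum⟩ := h
  obtain ⟨P', hidem', hsym', hrank', hsum'⟩ := h'
  refine ⟨Fin.append P P', fun i => ?_, fun i => ?_, fun i => ?_, ?_⟩
  · exact Fin.addCases (by simpa using hidem ·) (by simpa using hidem' ·) i
  · exact Fin.addCases (by simpa using hsym ·) (by simpa using hsym' ·) i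
  · exact Fin.addCases (by simpa using hrank ·) (by simpa using hrank' ·) i
  · simp [Fin.sum_univ_add, hsum, hsum', add_smul]

theorem kronecker (h : IsTFF N α L) (m : ℕ) : IsTFF (N * m) α (fun i => L i * m) := by
  obtain ⟨P, hidem, hsym, hrank, hsum⟩ := h
  let e := reindexAlgEquiv ℝ ℝ (finProdFinEquiv (m := N) (n := m))
  have hidem₁ (i : Fin K) : IsIdempotentElem (P i ⊗ₖ (1 : Matrix (Fin m) (Fin m) ℝ)) := by
    rw [IsIdempotentElem, ← mul_kronecker_mul, hidem, mul_one]
  refine ⟨fun i => e (P i ⊗ₖ 1), fun i => ?_, fun i => ?_, fun i => ?_, ?_⟩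
  · rw [← map_mul, hidem₁ i]
  · rw [coe_reindexAlgEquiv, transpose_reindex, ← kroneckerMap_transpose, hsym, transpose_one]
  · rw [coe_reindexAlgEquiv, rank_reindex]
    have := rank_eq_trace_of_isIdempotentElem (hidem₁ i)
    rw [trace_kronecker, trace_one, Fintype.card_fin,
      ← rank_eq_trace_of_isIdempotentElem (hidem i), hrank] at this
    exact_mod_cast this
  · have : ∑ i, P i ⊗ₖ (1 : Matrix (Fin m) (Fin m) ℝ) = (∑ i, P i) ⊗ₖ 1 := by
      ext; simp [Matrix.sum_apply, Finset.sum_mul]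
    rw [← map_sum, this, hsum, smul_kronecker, one_kronecker_one, map_smul, map_one]

theorem le_sum_compl (h : IsTFF N α L) (s : Finset (Fin K)) (hs : (s.card : ℝ) < α) :
    N ≤ ∑ i ∈ sᶜ, L i := by
  obtain ⟨P, hidem, hsym, hrank, hsum⟩ := h
  have hcompl : ∑ i ∈ sᶜ, P i = (α - s.card) • 1 + ∑ i ∈ s, (1 - P i) := by
    rw [Finset.sum_sub_distrib, Finset.sum_const, ← Nat.cast_smul_eq_nsmul ℝ, sub_smul,
      eq_sub_of_add_eq (Finset.sum_compl_add_sum s P), hsum]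
    abel
  have hpd : (∑ i ∈ sᶜ, P i).PosDef := by
    rw [hcompl]
    refine (Matrix.PosDef.one.smul (sub_pos.mpr hs)).add_posSemidef
      (Matrix.posSemidef_sum s fun i _ => ?_)
    exact Matrix.posSemidef_of_isIdempotentElem_of_transpose_eq
      (IsIdempotentElem.one_sub (hidem i)) (by simp [hsym i])
  simpa [hrank] using hpd.card_le_sum_rank

theorem sum_add_dim_le (h : IsTFF N α L) (s : Finset (Fin K)) (hs : α < s.card) :
    ∑ i ∈ s, L i + N ≤ s.card * N := by
  have hcard_compl : ((sᶜ.card : ℕ) : ℝ) < K - α := by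
    rw [Finset.card_compl, Fintype.card_fin, Nat.cast_sub (Finset.card_le_univ s |>.trans_eq
      (Fintype.card_fin K))]
    linarith
  have hcompl := h.compl.le_sum_compl sᶜ hcard_compl
  rw [compl_compl] at hcompl
  have hsplit : ∑ i ∈ s, (N - L i) + ∑ i ∈ s, L i = s.card * N := by
    rw [← Finset.sum_add_distrib, Finset.sum_congr rfl fun i _ => Nat.sub_add_cancel (h.le_dim i),
      Finset.sum_const, smul_eq_mul]
  omega

end IsTFF

theorem isTFF_const_dim (N K : ℕ) : IsTFF N K (fun _ : Fin K => N) :=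
  ⟨fun _ => 1, fun _ => mul_one 1, fun _ => transpose_one, fun _ => by simp [rank_one],
    by simp [Nat.cast_smul_eq_nsmul]⟩

theorem isTFF_of_tight_unit_vectors {N K : ℕ} {α : ℝ} (u : Fin K → Fin N → ℝ)
    (hu : ∀ i, u i ⬝ᵥ u i = 1) (hsum : ∑ i, vecMulVec (u i) (u i) = α • 1) :
    IsTFF N α (fun _ : Fin K => 1) := by
  have hidem (i : Fin K) : IsIdempotentElem (vecMulVec (u i) (u i)) := by
    rw [IsIdempotentElem, vecMulVec_mul_vecMulVec, hu, one_smul]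
  refine ⟨fun i => vecMulVec (u i) (u i), hidem, fun i => transpose_vecMulVec _ _, fun i => ?_,
    hsum⟩
  have := rank_eq_trace_of_isIdempotentElem (hidem i)
  rw [trace_vecMulVec, hu] at this
  exact_mod_cast this

noncomputable def mercedesBenz : Fin 3 → Fin 2 → ℝ :=
  ![![1, 0], ![-1 / 2, √3 / 2], ![-1 / 2, -(√3 / 2)]]

theorem isTFF_mercedesBenz : IsTFF 2 (3 / 2) (fun _ : Fin 3 => 1) := by
  have h3 : √3 * √3 = 3 := Real.mul_self_sqrt (by norm_num)
  refine isTFF_of_tight_unit_vectors mercedesBenz (fun i => ?_) ?_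
  · fin_cases i <;> simp [mercedesBenz, dotProduct, Fin.sum_univ_two] <;> nlinarith
  · ext a b
    fin_cases a <;> fin_cases b <;>
      simp [mercedesBenz, Fin.sum_univ_three, one_apply] <;> nlinarith

theorem isTFF_halfInteger {n N : ℕ} (hn : 0 < n) (hdvd : 2 ∣ N) :
    IsTFF N ((n : ℝ) + 1 / 2) (fun i : Fin (n + 2) => if (i : ℕ) < n - 1 then N else N / 2) := by
  obtain ⟨m, rfl⟩ := hdvd
  have h := ((isTFF_const_dim (2 * m) (n - 1)).append
    (isTFF_mercedesBenz.kronecker m)).comp_equiv (finCongr (by omega : n + 2 = n - 1 + 3))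
  convert h using 1
  · push_cast [Nat.cast_sub hn]
    ring
  · funext i
    simp [Fin.append, Fin.addCases]

theorem IsTFF.majorizes_halfInteger {n N K : ℕ} {L : Fin K → ℕ} (hn : 0 < n) (hdvd : 2 ∣ N)
    (h : IsTFF N ((n : ℝ) + 1 / 2) L) :
    Majorizes L (fun i : Fin (n + 2) => if (i : ℕ) < n - 1 then N else N / 2) := by
  obtain ⟨m, rfl⟩ := hdvd
  obtain ⟨n, rfl⟩ : ∃ n', n = n' + 1 := ⟨n - 1, by omega⟩
  simp only [Nat.add_sub_cancel, Nat.mul_div_cancel_left m two_pos]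
  have htotal : ∑ i, L i = 2 * (n + 1) * m + m := by
    have : (∑ i, L i : ℝ) = ((2 * (n + 1) * m + m : ℕ) : ℝ) := by
      rw [h.sum_eq]
      push_cast
      ring
    exact_mod_cast this
  refine ⟨?_, fun k hk => ?_⟩
  · rw [htotal, Fin.sum_univ_eq_sum_range (fun j => if j < n then 2 * m else m),
      Finset.sum_range_ite_lt, min_eq_right (by omega), show n + 1 + 2 - n = 3 by omega]
    ring
  · have hkK : k ≤ K := hk.trans (min_le_left _ _)
    set s := Finset.univ.filter (fun i : Fin K => (i : ℕ) < k)
    have hcard : s.card = k := by rw [Fin.card_filter_val_lt, min_eq_right hkK]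
    rw [Fin.sum_filter_val_lt_eq_sum_range (hk.trans (min_le_right _ _))
      (fun j => if j < n then 2 * m else m), Finset.sum_range_ite_lt]
    rcases (by omega : k ≤ n ∨ k = n + 1 ∨ k = n + 2 ∨ k = n + 3) with hkn | rfl | rfl | rfl
    · rw [min_eq_left hkn, Nat.sub_eq_zero_of_le hkn, zero_mul, add_zero, ← hcard]
      exact Finset.sum_le_card_nsmul s L _ fun i _ => h.le_dim i
    · have hcompl := h.le_sum_compl s (by rw [hcard]; push_cast; linarith)
      have hsplit := Finset.sum_add_sum_compl s L
      rw [min_eq_right (by omega), show n + 1 - n = 1 by omega]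
      linarith
    · have hhead := h.sum_add_dim_le s (by rw [hcard]; push_cast; linarith)
      rw [hcard] at hhead
      rw [min_eq_right (by omega), show n + 2 - n = 2 by omega]
      linarith
    · have hsub := Finset.sum_le_sum_of_subset (f := L) (Finset.subset_univ s)
      rw [min_eq_right (by omega), show n + 3 - n = 3 by omega]
      linarith

theorem TFF_max_half_integer_general (n N : ℕ) (hn : 0 < n) (hdvd : 2 ∣ N) :
    IsTFF N ((n : ℝ) + 1 / 2)
      (fun i : Fin (n + 2) => if (i : ℕ) < n - 1 then N else N / 2) ∧
    ∀ (K : ℕ) (L' : Fin K → ℕ), Antitone L' → (∀ i, 0 < L' i) →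
      IsTFF N ((n : ℝ) + 1 / 2) L' →
      Majorizes L' (fun i : Fin (n + 2) => if (i : ℕ) < n - 1 then N else N / 2) :=
  ⟨isTFF_halfInteger hn hdvd, fun _ _ _ _ h => h.majorizes_halfInteger hn hdvd⟩

/-- For `α = n + 1/2` with `N` even, the sequence consisting of `n - 1` copies of `N`
followed by three copies of `N/2` is the unique maximal element of `TFF(α, N)` with
respect to majorization. -/
theorem TFF_max_half_integer (n N : ℕ) (hn : 0 < n) (hN : 0 < N) (hdvd : 2 ∣ N) :
    IsTFF N ((n : ℝ) + 1 / 2)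
      (fun i : Fin (n + 2) => if (i : ℕ) < n - 1 then N else N / 2) ∧
    ∀ (K : ℕ) (L' : Fin K → ℕ), Antitone L' → (∀ i, 0 < L' i) →
      IsTFF N ((n : ℝ) + 1 / 2) L' →
      Majorizes L' (fun i : Fin (n + 2) => if (i : ℕ) < n - 1 then N else N / 2) :=
  TFF_max_half_integer_general n N hn hdvd
end

section
/- Let (L_1 ≥ L_2 ≥ ⋯ ≥ L_K) ∈ TFF(α, N) and let k be an integer with 2 ≤ k ≤ K. If α < k/(k−1), then L_1 + L_2 + ⋯ + L_k ≤ N. -/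
open Matrix

/-!
If the ranges of `P_1, …, P_k` had total dimension larger than `N`, there would be vectors
`y_i ∈ ran P_i`, not all zero, with `∑ y_i = 0`. Then `y_m = P_m y_m = -∑_{j ≠ m} P_m y_j`, so by
Cauchy–Schwarz `‖y_m‖² ≤ (k - 1) ∑_{j ≠ m} ‖P_m y_j‖²`, while the frame identity
`∑_i ‖P_i y‖² = α ‖y‖²` gives `∑_{m ≠ j} ‖P_m y_j‖² ≤ (α - 1) ‖y_j‖²`. Summing over `m` yields
`∑ ‖y_m‖² ≤ (k - 1)(α - 1) ∑ ‖y_m‖²`, which is impossible when `(k - 1)(α - 1) < 1`, i.e.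
`α < k / (k - 1)`.
-/

open Module Finset LinearMap

theorem Submodule.exists_ne_zero_sum_eq_zero_of_finrank_lt {K V ι : Type*} [Field K]
    [AddCommGroup V] [Module K V] [FiniteDimensional K V] [Fintype ι] (W : ι → Submodule K V)
    (h : finrank K V < ∑ i, finrank K (W i)) :
    ∃ y : ι → V, (∀ i, y i ∈ W i) ∧ ∑ i, y i = 0 ∧ y ≠ 0 := by
  classical
  let φ : ((i : ι) → W i) →ₗ[K] V := LinearMap.lsum K (fun i ↦ W i) K fun i ↦ (W i).subtype
  have hφ : ¬ Function.Injective φ := fun hinj ↦ by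
    have := LinearMap.finrank_le_finrank_of_injective hinj
    rw [Module.finrank_pi_fintype] at this
    omega
  obtain ⟨f, hf, hf0⟩ := (Submodule.ne_bot_iff _).mp (mt LinearMap.ker_eq_bot.mp hφ)
  refine ⟨fun i ↦ f i, fun i ↦ (f i).2, by simpa [φ] using hf, fun h0 ↦ hf0 ?_⟩
  funext i
  exact Subtype.ext (congrFun h0 i)

section NormedSpace

variable {ι R V : Type*} [Fintype ι] [Semiring R] [SeminormedAddCommGroup V] [Module R V]

theorem norm_le_sum_erase_norm_apply_of_sum_eq_zero [DecidableEq ι] (p : V →ₗ[R] V)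
    {y : ι → V} (hsum : ∑ i, y i = 0) {m : ι} (hm : p (y m) = y m) :
    ‖y m‖ ≤ ∑ j ∈ univ.erase m, ‖p (y j)‖ := by
  have hym : y m = -∑ j ∈ univ.erase m, y j := by
    rw [eq_neg_iff_add_eq_zero, add_sum_erase _ _ (mem_univ m), hsum]
  calc ‖y m‖ = ‖∑ j ∈ univ.erase m, p (y j)‖ := by rw [← hm, hym, map_neg, map_sum, norm_neg]
    _ ≤ ∑ j ∈ univ.erase m, ‖p (y j)‖ := norm_sum_le _ _

theorem sum_norm_sq_le_of_sum_eq_zero {p : ι → V →ₗ[R] V} {α : ℝ}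
    (hframe : ∀ x, ∑ i, ‖p i x‖ ^ 2 ≤ α * ‖x‖ ^ 2)
    {y : ι → V} (hfix : ∀ i, p i (y i) = y i) (hsum : ∑ i, y i = 0) :
    ∑ i, ‖y i‖ ^ 2 ≤ (Fintype.card ι - 1) * (α - 1) * ∑ i, ‖y i‖ ^ 2 := by
  classical
  rcases isEmpty_or_nonempty ι with hι | hι
  · simp
  have hcard : ∀ m : ι, (#(univ.erase m) : ℝ) = Fintype.card ι - 1 := fun m ↦ by
    rw [card_erase_of_mem (mem_univ m), card_univ, Nat.cast_pred Fintype.card_pos]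
  have hrow : ∀ m, ‖y m‖ ^ 2 ≤ (Fintype.card ι - 1) * ∑ j ∈ univ.erase m, ‖p m (y j)‖ ^ 2 :=
    fun m ↦ calc
      ‖y m‖ ^ 2 ≤ (∑ j ∈ univ.erase m, ‖p m (y j)‖) ^ 2 := by
        gcongr
        exact norm_le_sum_erase_norm_apply_of_sum_eq_zero (p m) hsum (hfix m)
      _ ≤ _ := hcard m ▸ sq_sum_le_card_mul_sum_sq
  have hcol : ∀ j, ∑ m ∈ univ.erase j, ‖p m (y j)‖ ^ 2 ≤ (α - 1) * ‖y j‖ ^ 2 := fun j ↦ by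
    have := hframe (y j)
    rw [← add_sum_erase _ _ (mem_univ j), hfix j] at this
    linarith
  have hk : (0 : ℝ) ≤ Fintype.card ι - 1 := by
    rw [← hcard hι.some]
    positivity
  calc ∑ m, ‖y m‖ ^ 2
      ≤ ∑ m, (Fintype.card ι - 1) * ∑ j ∈ univ.erase m, ‖p m (y j)‖ ^ 2 :=
        sum_le_sum fun m _ ↦ hrow m
    _ = (Fintype.card ι - 1) * ∑ j, ∑ m ∈ univ.erase j, ‖p m (y j)‖ ^ 2 := by
        rw [← mul_sum, sum_comm' (t' := univ) (s' := fun j ↦ univ.erase j)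
          fun m j ↦ by simp [ne_comm]]
    _ ≤ (Fintype.card ι - 1) * ∑ j, (α - 1) * ‖y j‖ ^ 2 := by
        gcongr with j
        exact hcol j
    _ = _ := by rw [← mul_sum, mul_assoc]

end NormedSpace

theorem sum_finrank_range_le_finrank {ι K E : Type*} [Fintype ι] [Field K]
    [NormedAddCommGroup E] [Module K E] [FiniteDimensional K E] {p : ι → E →ₗ[K] E}
    (hp : ∀ i, IsIdempotentElem (p i)) {α : ℝ} (hframe : ∀ x, ∑ i, ‖p i x‖ ^ 2 ≤ α * ‖x‖ ^ 2)
    (hα : (Fintype.card ι - 1) * (α - 1) < 1) :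
    ∑ i, finrank K (range (p i)) ≤ finrank K E := by
  by_contra! h
  obtain ⟨y, hy, hsum, hy0⟩ := Submodule.exists_ne_zero_sum_eq_zero_of_finrank_lt _ h
  have hfix : ∀ i, p i (y i) = y i := fun i ↦ (hp i).mem_range_iff.mp (hy i)
  have hpos : 0 < ∑ i, ‖y i‖ ^ 2 := by
    obtain ⟨i, hi⟩ := Function.ne_iff.mp hy0
    exact sum_pos' (fun i _ ↦ by positivity) ⟨i, mem_univ _, pow_pos (norm_pos_iff.mpr hi) 2⟩
  nlinarith [sum_norm_sq_le_of_sum_eq_zero hframe hfix hsum]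

section InnerProductSpace

variable {ι E : Type*} [Fintype ι] [NormedAddCommGroup E] [InnerProductSpace ℝ E]

theorem LinearMap.IsSymmetricProjection.norm_sq_apply {p : E →ₗ[ℝ] E}
    (hp : p.IsSymmetricProjection) (x : E) : ‖p x‖ ^ 2 = inner ℝ (p x) x := by
  rw [← real_inner_self_eq_norm_sq, hp.isSymmetric, ← Module.End.mul_apply,
    hp.isIdempotentElem.eq, real_inner_comm]

theorem sum_norm_sq_apply_eq_of_sum_eq_smul_one {p : ι → E →ₗ[ℝ] E}
    (hp : ∀ i, (p i).IsSymmetricProjection) {α : ℝ} (hsum : ∑ i, p i = α • 1) (x : E) :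
    ∑ i, ‖p i x‖ ^ 2 = α * ‖x‖ ^ 2 := by
  simp_rw [(hp _).norm_sq_apply, ← sum_inner, ← LinearMap.sum_apply, hsum]
  simp [real_inner_smul_left]

end InnerProductSpace

theorem Matrix.isSymmetricProjection_toEuclideanLin {n : ℕ} {P : Matrix (Fin n) (Fin n) ℝ}
    (hidem : P * P = P) (hsymm : Pᵀ = P) : (toEuclideanLin P).IsSymmetricProjection where
  isIdempotentElem := by
    rw [IsIdempotentElem, ← coe_toEuclideanCLM_eq_toEuclideanLin,
      ← ContinuousLinearMap.toLinearMap_mul, ← map_mul, hidem]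
  isSymmetric := isSymmetric_toEuclideanLin_iff.mpr hsymm

theorem Matrix.finrank_range_toEuclideanLin {n : ℕ} (P : Matrix (Fin n) (Fin n) ℝ) :
    finrank ℝ (range (toEuclideanLin P)) = P.rank := by
  rw [toEuclideanLin_eq_toLin_orthonormal, ← rank_eq_finrank_range_toLin]

theorem TFF_first_k_ranks_le_general {K N : ℕ} (α : ℝ)
    (L : Fin K → ℕ)
    (h : IsTFF N α L)
    (k : ℕ) (hk2 : 2 ≤ k) (hkK : k ≤ K)
    (hα : α < (k : ℝ) / ((k : ℝ) - 1)) :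
    ∑ i ∈ Finset.univ.filter (fun i : Fin K => (i : ℕ) < k), L i ≤ N := by
  obtain ⟨P, hidem, hsymm, hrank, hsum⟩ := h
  set S := univ.filter fun i : Fin K ↦ (i : ℕ) < k
  let T i := Matrix.toEuclideanLin (P i)
  have hT i : (T i).IsSymmetricProjection :=
    Matrix.isSymmetricProjection_toEuclideanLin (hidem i) (hsymm i)
  have hframe := sum_norm_sq_apply_eq_of_sum_eq_smul_one (α := α) hT
    (by ext x : 1; simp [T, ← map_sum, hsum])
  have hcard : Fintype.card S = k := by
    rw [Fintype.card_coe, Fin.card_filter_val_lt, min_eq_right hkK]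
  have hαk : ((k : ℝ) - 1) * (α - 1) < 1 := by
    have hk : (0 : ℝ) < k - 1 := by
      have : (2 : ℝ) ≤ k := by exact_mod_cast hk2
      linarith
    nlinarith [(lt_div_iff₀ hk).mp hα]
  have hS := sum_finrank_range_le_finrank (p := fun i : S ↦ T i)
    (fun i ↦ (hT i).isIdempotentElem)
    (fun x ↦ (sum_coe_sort S fun i ↦ ‖T i x‖ ^ 2).trans_le
      ((sum_le_univ_sum_of_nonneg fun _ ↦ by positivity).trans (hframe x).le))
    (by rwa [hcard])
  rw [sum_coe_sort S fun i ↦ finrank ℝ (range (T i)), finrank_euclideanSpace_fin] at hS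
  simpa only [T, Matrix.finrank_range_toEuclideanLin, hrank] using hS

/-- If `(L_1 ≥ ⋯ ≥ L_K) ∈ TFF(α, N)`, `2 ≤ k ≤ K` and `α < k/(k-1)`, then
`L_1 + ⋯ + L_k ≤ N`. -/
theorem TFF_first_k_ranks_le {K N : ℕ} (α : ℝ)
    (L : Fin K → ℕ) (hL : Antitone L) (hpos : ∀ i, 0 < L i)
    (h : IsTFF N α L)
    (k : ℕ) (hk2 : 2 ≤ k) (hkK : k ≤ K)
    (hα : α < (k : ℝ) / ((k : ℝ) - 1)) :
    ∑ i ∈ Finset.univ.filter (fun i : Fin K => (i : ℕ) < k), L i ≤ N :=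
  TFF_first_k_ranks_le_general α L h k hk2 hkK hα
end

section
/- (Combinatorial Naimark duality) Fix a positive integer N and a weakly decreasing sequence (L_1 ≥ ⋯ ≥ L_K) of positive integers with L_1 ≤ N, set M = Σ_{i=1}^K L_i, and suppose M > N. Then the number of configuration matrices for (L_1, …, L_K; N) (these are N×M matrices with row sums M and column sums N) equals the number of configuration matrices for (L_1, …, L_K; M−N) (these are (M−N)×M matrices with row sums M and column sums M−N, with the same block widths L_1,…,L_K). Equivalently, the Littlewood-Richardson coefficients satisfy c((N^{L_1}),…,(N^{L_K});(M^N)) = c(((M−N)^{L_1}),…,((M−N)^{L_K});(M^{M−N})). -/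
open Matrix

/-- The starting (0-based) column index of the `k`-th block in a matrix whose `i`-th
column block has `L i` columns. -/
def blockStart {K : ℕ} (L : Fin K → ℕ) (k : Fin K) : ℕ :=
  ∑ i ∈ Finset.univ.filter (fun i : Fin K => i < k), L i

/-- `A` is a configuration matrix for `(L_1, …, L_K; N)`: an `N × M` matrix
(`M = Σᵢ Lᵢ`) with (i) nonnegative integer entries, (ii) all row sums `M`,
(iii) all column sums `N`, (iv) row sum dominance
`Σ_{j ≤ l} (A[i,j] - A[i+1,j]) ≥ A[i+1, l+1]`, and (v) column sum dominance
`Σ_{i ≤ l} (A[i,j] - A[i,j+1]) ≥ A[l+1, j+1]` within each column block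
(indices here 0-based; the comparisons are stated with sums moved to one side). -/
def IsConfig (N K M : ℕ) (L : Fin K → ℕ) (A : Matrix (Fin N) (Fin M) ℤ) : Prop :=
  (M = ∑ i, L i) ∧
  (∀ i j, 0 ≤ A i j) ∧
  (∀ i, ∑ j, A i j = M) ∧
  (∀ j, ∑ i, A i j = N) ∧
  (∀ i i' : Fin N, (i' : ℕ) = (i : ℕ) + 1 →
    ∀ l : Fin M,
      A i' l ≤ ∑ j ∈ Finset.univ.filter (fun j : Fin M => (j : ℕ) < (l : ℕ)),
        (A i j - A i' j)) ∧
  (∀ k : Fin K, ∀ c c' : Fin M, (c' : ℕ) = (c : ℕ) + 1 →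
    blockStart L k ≤ (c : ℕ) → (c' : ℕ) < blockStart L k + L k →
    ∀ r : Fin N,
      A r c' ≤ ∑ i ∈ Finset.univ.filter (fun i : Fin N => (i : ℕ) < (r : ℕ)),
        (A i c - A i c'))

/-!
Encode an `n × m` configuration matrix `A` by its eigensteps `λ(j, r)`, the sum of the first `j`
entries of row `r`, padded by `λ(j, r) = m` for `r ≤ 0` and `λ(j, r) = 0` for `r > n`. Row
dominance reads `λ(j + 1, r + 1) ≤ λ(j, r)`; with the row sums it forces `λ(j, r) = 0` for `r > j`
and `λ(j, r) = m` for `r + m ≤ j + n`. Hence, for `n + n' = m`, the table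
`λ'(j, r) = m - λ(j, j + 1 - r)` is an eigenstep table with `n'` rows, and the `n' × m` matrix it
encodes is again a configuration matrix: nonnegativity and row dominance trade places, and the
block column condition, read on the partial sums `Λ(j, a) = ∑_{r ≤ a} λ(j, r)`, is carried to
itself by `a ↦ j - a`. Doing this twice returns `A`, so the two sets are in bijection.
-/

namespace ConfigMatrix

open Finset

variable {n m : ℕ}

def extendByZero (A : Matrix (Fin n) (Fin m) ℤ) (i j : ℕ) : ℤ :=
  if h : i < n ∧ j < m then A ⟨i, h.1⟩ ⟨j, h.2⟩ else 0

@[simp]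
lemma extendByZero_coe (A : Matrix (Fin n) (Fin m) ℤ) (i : Fin n) (j : Fin m) :
    extendByZero A i j = A i j := by
  simp [extendByZero]

lemma extendByZero_of_le_left (A : Matrix (Fin n) (Fin m) ℤ) {i : ℕ} (hi : n ≤ i) (j : ℕ) :
    extendByZero A i j = 0 := by
  simp [extendByZero, hi.not_gt]

lemma extendByZero_of_le_right (A : Matrix (Fin n) (Fin m) ℤ) (i : ℕ) {j : ℕ} (hj : m ≤ j) :
    extendByZero A i j = 0 := by
  simp [extendByZero, hj.not_gt]

lemma extendByZero_nonneg {A : Matrix (Fin n) (Fin m) ℤ} (h0 : ∀ i j, 0 ≤ A i j) (i j : ℕ) :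
    0 ≤ extendByZero A i j := by
  unfold extendByZero
  split <;> simp [h0]

lemma sum_range_extendByZero_row (A : Matrix (Fin n) (Fin m) ℤ) (i : Fin n) {k : ℕ}
    (hk : m ≤ k) : ∑ c ∈ range k, extendByZero A i c = ∑ c, A i c := by
  rw [← sum_range_add_sum_Ico _ hk,
    sum_eq_zero fun c hc => extendByZero_of_le_right A i (mem_Ico.1 hc).1, add_zero,
    ← Fin.sum_univ_eq_sum_range (fun c => extendByZero A i c)]
  simp

lemma sum_range_extendByZero_col (A : Matrix (Fin n) (Fin m) ℤ) (c : Fin m) {k : ℕ}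
    (hk : n ≤ k) : ∑ t ∈ range k, extendByZero A t c = ∑ i, A i c := by
  rw [← sum_range_add_sum_Ico _ hk,
    sum_eq_zero fun t ht => extendByZero_of_le_left A (mem_Ico.1 ht).1 c, add_zero,
    ← Fin.sum_univ_eq_sum_range (fun t => extendByZero A t c)]
  simp

lemma sum_filter_val_lt {M : Type*} [AddCommMonoid M] {k : ℕ} (l : Fin k) (f : ℕ → M) :
    ∑ j ∈ univ.filter (fun j : Fin k => (j : ℕ) < l), f j = ∑ t ∈ range l, f t := by
  have : univ.filter (fun j : Fin k => (j : ℕ) < l) = Iio l := by ext; simp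
  rw [this, ← Nat.Iio_eq_range, ← Fin.map_valEmbedding_Iio, sum_map]
  rfl

def eigenstep (A : Matrix (Fin n) (Fin m) ℤ) (j : ℕ) (r : ℤ) : ℤ :=
  if r ≤ 0 then m else ∑ c ∈ range j, extendByZero A (r.toNat - 1) c

section Eigenstep

variable (A : Matrix (Fin n) (Fin m) ℤ)

lemma eigenstep_of_nonpos (j : ℕ) {r : ℤ} (hr : r ≤ 0) : eigenstep A j r = m := by
  simp [eigenstep, hr]

lemma eigenstep_natCast_add_one (j t : ℕ) :
    eigenstep A j (t + 1) = ∑ c ∈ range j, extendByZero A t c := by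
  simp [eigenstep, show ¬ ((t : ℤ) + 1 ≤ 0) by omega]

lemma eigenstep_of_lt (j : ℕ) {r : ℤ} (hr : n < r) : eigenstep A j r = 0 := by
  obtain ⟨t, rfl⟩ : ∃ t : ℕ, r = t + 1 := ⟨r.toNat - 1, by omega⟩
  rw [eigenstep_natCast_add_one]
  exact sum_eq_zero fun c _ => extendByZero_of_le_left A (by omega) c

lemma eigenstep_row_sum (i : Fin n) : eigenstep A m (i + 1) = ∑ c, A i c := by
  rw [eigenstep_natCast_add_one, sum_range_extendByZero_row A i le_rfl]

lemma eigenstep_succ_sub (j t : ℕ) :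
    eigenstep A (j + 1) (t + 1) - eigenstep A j (t + 1) = extendByZero A t j := by
  rw [eigenstep_natCast_add_one, eigenstep_natCast_add_one, sum_range_succ, add_sub_cancel_left]

end Eigenstep

lemma eigenstep_le_succ {A : Matrix (Fin n) (Fin m) ℤ} (h0 : ∀ i j, 0 ≤ A i j) (j : ℕ)
    (r : ℤ) : eigenstep A j r ≤ eigenstep A (j + 1) r := by
  rcases le_or_gt r 0 with hr | hr
  · simp [eigenstep_of_nonpos A _ hr]
  obtain ⟨t, rfl⟩ : ∃ t : ℕ, r = t + 1 := ⟨r.toNat - 1, by omega⟩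
  linarith [eigenstep_succ_sub A j t, extendByZero_nonneg h0 t j]

lemma eigenstep_nonneg {A : Matrix (Fin n) (Fin m) ℤ} (h0 : ∀ i j, 0 ≤ A i j) (j : ℕ)
    (r : ℤ) : 0 ≤ eigenstep A j r := by
  unfold eigenstep
  split
  · positivity
  · exact sum_nonneg fun c _ => extendByZero_nonneg h0 _ c

lemma eigenstep_le {A : Matrix (Fin n) (Fin m) ℤ} (h0 : ∀ i j, 0 ≤ A i j)
    (hrow : ∀ i, ∑ j, A i j = m) (j : ℕ) (r : ℤ) : eigenstep A j r ≤ m := by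
  rcases le_or_gt r 0 with hr | hr
  · exact (eigenstep_of_nonpos A j hr).le
  rcases le_or_gt r n with hrn | hrn
  · obtain ⟨i, rfl⟩ : ∃ i : Fin n, r = (i : ℕ) + 1 := ⟨⟨r.toNat - 1, by omega⟩, by simp; omega⟩
    calc eigenstep A j ((i : ℕ) + 1) = ∑ c ∈ range j, extendByZero A i c :=
          eigenstep_natCast_add_one A j i
      _ ≤ ∑ c ∈ range (j + m), extendByZero A i c :=
          sum_le_sum_of_subset_of_nonneg (range_subset_range.2 (by omega))
            fun c _ _ => extendByZero_nonneg h0 i c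
      _ = m := by rw [sum_range_extendByZero_row A i (by omega), hrow]
  · rw [eigenstep_of_lt A j hrn]
    positivity

def RowDominant (A : Matrix (Fin n) (Fin m) ℤ) : Prop :=
  ∀ i i' : Fin n, (i' : ℕ) = (i : ℕ) + 1 →
    ∀ l : Fin m,
      A i' l ≤ ∑ j ∈ Finset.univ.filter (fun j : Fin m => (j : ℕ) < (l : ℕ)),
        (A i j - A i' j)

lemma le_sum_row_sub_iff_eigenstep_le (A : Matrix (Fin n) (Fin m) ℤ) {i i' : Fin n}
    (hi : (i' : ℕ) = i + 1) (l : Fin m) :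
    A i' l ≤ ∑ j ∈ univ.filter (fun j : Fin m => (j : ℕ) < l), (A i j - A i' j) ↔
      eigenstep A (l + 1) ((i : ℕ) + 1 + 1) ≤ eigenstep A l ((i : ℕ) + 1) := by
  simp only [← extendByZero_coe A]
  rw [sum_filter_val_lt l (fun t => extendByZero A i t - extendByZero A i' t), sum_sub_distrib,
    show ((i : ℕ) : ℤ) + 1 + 1 = ((i' : ℕ) : ℤ) + 1 by omega, eigenstep_natCast_add_one,
    eigenstep_natCast_add_one, sum_range_succ]
  constructor <;> intro h <;> linarith

lemma eigenstep_succ_succ_le {A : Matrix (Fin n) (Fin m) ℤ} (h0 : ∀ i j, 0 ≤ A i j)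
    (hrow : ∀ i, ∑ j, A i j = m) (hiv : RowDominant A) {j : ℕ} (hj : j < m) (r : ℤ) :
    eigenstep A (j + 1) (r + 1) ≤ eigenstep A j r := by
  rcases lt_trichotomy r 0 with hr | rfl | hr
  · rw [eigenstep_of_nonpos A _ hr.le, eigenstep_of_nonpos A _ (by omega)]
  · rw [eigenstep_of_nonpos A _ le_rfl]
    exact eigenstep_le h0 hrow _ _
  rcases lt_or_ge r n with hrn | hrn
  · obtain ⟨i, rfl⟩ : ∃ i : ℕ, r = i + 1 := ⟨r.toNat - 1, by omega⟩
    exact (le_sum_row_sub_iff_eigenstep_le A (i := ⟨i, by omega⟩) (i' := ⟨i + 1, by omega⟩) rfl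
      ⟨j, hj⟩).1 (hiv _ _ rfl _)
  · rw [eigenstep_of_lt A _ (by omega)]
    exact eigenstep_nonneg h0 _ _

lemma eigenstep_eq_zero_of_lt {A : Matrix (Fin n) (Fin m) ℤ} (h0 : ∀ i j, 0 ≤ A i j)
    (hrow : ∀ i, ∑ j, A i j = m) (hiv : RowDominant A) {j : ℕ} (hj : j ≤ m) {r : ℤ}
    (hr : j < r) : eigenstep A j r = 0 := by
  induction j generalizing r with
  | zero =>
    obtain ⟨t, rfl⟩ : ∃ t : ℕ, r = t + 1 := ⟨r.toNat - 1, by omega⟩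
    simp [eigenstep_natCast_add_one]
  | succ j ih =>
    have hle := eigenstep_succ_succ_le h0 hrow hiv (j := j) (by omega) (r - 1)
    rw [sub_add_cancel, ih (by omega) (by omega)] at hle
    exact le_antisymm hle (eigenstep_nonneg h0 _ _)

lemma eigenstep_eq_of_add_le {A : Matrix (Fin n) (Fin m) ℤ} (h0 : ∀ i j, 0 ≤ A i j)
    (hrow : ∀ i, ∑ j, A i j = m) (hiv : RowDominant A) {j : ℕ} (hj : j ≤ m) {r : ℤ}
    (hr : r + m ≤ j + n) : eigenstep A j r = m := by
  obtain ⟨d, hd⟩ : ∃ d, j + d = m := ⟨m - j, by omega⟩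
  induction d generalizing j r with
  | zero =>
    rcases le_or_gt r 0 with hr0 | hr0
    · exact eigenstep_of_nonpos A j hr0
    obtain ⟨i, rfl⟩ : ∃ i : Fin n, r = (i : ℕ) + 1 := ⟨⟨r.toNat - 1, by omega⟩, by simp; omega⟩
    rw [show j = m by omega, eigenstep_row_sum, hrow]
  | succ d ih =>
    have hle := eigenstep_succ_succ_le h0 hrow hiv (j := j) (by omega) r
    rw [ih (by omega) (by push_cast; omega) (by omega)] at hle
    exact le_antisymm (eigenstep_le h0 hrow j r) hle

/-- The antiderivative of `eigenstep A j` in `r` that vanishes at `0`. -/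
def cumEigenstep (A : Matrix (Fin n) (Fin m) ℤ) (j : ℕ) (a : ℤ) : ℤ :=
  m * min a 0 + ∑ t ∈ range a.toNat, eigenstep A j (t + 1)

section Cumulative

variable (A : Matrix (Fin n) (Fin m) ℤ)

lemma cumEigenstep_natCast (j k : ℕ) :
    cumEigenstep A j k = ∑ t ∈ range k, eigenstep A j (t + 1) := by
  simp [cumEigenstep]

lemma cumEigenstep_sub_one (j : ℕ) (a : ℤ) :
    cumEigenstep A j a - cumEigenstep A j (a - 1) = eigenstep A j a := by
  rcases le_or_gt a 0 with ha | ha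
  · simp only [cumEigenstep, min_eq_left ha, min_eq_left (show a - 1 ≤ 0 by omega),
      Int.toNat_of_nonpos ha, Int.toNat_of_nonpos (show a - 1 ≤ 0 by omega),
      eigenstep_of_nonpos A j ha]
    ring
  · obtain ⟨k, rfl⟩ : ∃ k : ℕ, a = k + 1 := ⟨a.toNat - 1, by omega⟩
    rw [add_sub_cancel_right, show (k : ℤ) + 1 = ((k + 1 : ℕ) : ℤ) by push_cast; ring,
      cumEigenstep_natCast, cumEigenstep_natCast, sum_range_succ, add_sub_cancel_left]
    push_cast
    ring_nf

lemma cumEigenstep_succ_sub (c : ℕ) (a : ℤ) :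
    cumEigenstep A (c + 1) a - cumEigenstep A c a = ∑ t ∈ range a.toNat, extendByZero A t c := by
  rw [cumEigenstep, cumEigenstep, add_sub_add_left_eq_sub, ← sum_sub_distrib]
  exact sum_congr rfl fun t _ => eigenstep_succ_sub A c t

lemma sum_col_eq_cumEigenstep_sub (c : Fin m) :
    ∑ i, A i c = cumEigenstep A (c + 1) n - cumEigenstep A c n := by
  rw [cumEigenstep_succ_sub, Int.toNat_natCast, sum_range_extendByZero_col A c le_rfl]

end Cumulative

lemma cumEigenstep_of_add_le {A : Matrix (Fin n) (Fin m) ℤ} (h0 : ∀ i j, 0 ≤ A i j)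
    (hrow : ∀ i, ∑ j, A i j = m) (hiv : RowDominant A) {j : ℕ} (hj : j ≤ m) {a : ℤ}
    (ha : a + m ≤ j + n) : cumEigenstep A j a = m * a := by
  rcases le_or_gt a 0 with ha0 | ha0
  · simp [cumEigenstep, min_eq_left ha0, Int.toNat_of_nonpos ha0]
  obtain ⟨k, rfl⟩ : ∃ k : ℕ, a = k := ⟨a.toNat, by omega⟩
  rw [cumEigenstep_natCast, sum_congr rfl fun t ht =>
    eigenstep_eq_of_add_le h0 hrow hiv hj (by have := mem_range.1 ht; omega)]
  simp [mul_comm]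

lemma cumEigenstep_self {A : Matrix (Fin n) (Fin m) ℤ} (h0 : ∀ i j, 0 ≤ A i j)
    (hrow : ∀ i, ∑ j, A i j = m) (hcol : ∀ j, ∑ i, A i j = n) (hiv : RowDominant A) {j : ℕ}
    (hj : j ≤ m) : cumEigenstep A j j = j * n := by
  have above_diagonal : ∑ t ∈ range n, eigenstep A j ((j + t : ℕ) + 1) = 0 :=
    sum_eq_zero fun t _ => eigenstep_eq_zero_of_lt h0 hrow hiv hj (by push_cast; omega)
  have below_rows : ∑ t ∈ range j, eigenstep A j ((n + t : ℕ) + 1) = 0 :=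
    sum_eq_zero fun t _ => eigenstep_of_lt A j (by push_cast; omega)
  calc cumEigenstep A j j = ∑ t ∈ range (j + n), eigenstep A j (t + 1) := by
        rw [cumEigenstep_natCast, sum_range_add, above_diagonal, add_zero]
    _ = ∑ t ∈ range n, ∑ c ∈ range j, extendByZero A t c := by
        rw [add_comm, sum_range_add, below_rows, add_zero]
        exact sum_congr rfl fun t _ => eigenstep_natCast_add_one A j t
    _ = j * n := by
        rw [sum_comm, sum_congr rfl fun c hc =>
          (sum_range_extendByZero_col A ⟨c, by have := mem_range.1 hc; omega⟩ le_rfl).trans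
            (hcol _)]
        simp

def ColumnDominant (A : Matrix (Fin n) (Fin m) ℤ) (c c' : Fin m) : Prop :=
  ∀ r : Fin n,
    A r c' ≤ ∑ i ∈ Finset.univ.filter (fun i : Fin n => (i : ℕ) < (r : ℕ)), (A i c - A i c')

lemma le_sum_col_sub_iff (A : Matrix (Fin n) (Fin m) ℤ) (c c' : Fin m) (r : Fin n) :
    A r c' ≤ ∑ i ∈ univ.filter (fun i : Fin n => (i : ℕ) < r), (A i c - A i c') ↔
      ∑ t ∈ range (r + 1), extendByZero A t c' ≤ ∑ t ∈ range r, extendByZero A t c := by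
  simp only [← extendByZero_coe A]
  rw [sum_filter_val_lt r (fun t => extendByZero A t c - extendByZero A t c'), sum_sub_distrib,
    sum_range_succ]
  constructor <;> intro h <;> linarith

lemma columnDominant_iff_cumEigenstep {A : Matrix (Fin n) (Fin m) ℤ} {c c' : Fin m}
    (hc : (c' : ℕ) = c + 1) (hsum : ∑ i, A i c = ∑ i, A i c') :
    ColumnDominant A c c' ↔ ∀ a : ℤ,
      cumEigenstep A (c' + 1) (a + 1) - cumEigenstep A c' (a + 1) ≤
        cumEigenstep A c' a - cumEigenstep A c a := by
  have hdiff := cumEigenstep_succ_sub A c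
  rw [← hc] at hdiff
  simp only [cumEigenstep_succ_sub, hdiff]
  constructor
  · intro h a
    rcases lt_or_ge a 0 with ha | ha
    · simp [Int.toNat_of_nonpos (show a + 1 ≤ 0 by omega), Int.toNat_of_nonpos ha.le]
    obtain ⟨k, rfl⟩ : ∃ k : ℕ, a = k := ⟨a.toNat, by omega⟩
    rw [show (k : ℤ) + 1 = ((k + 1 : ℕ) : ℤ) by push_cast; ring, Int.toNat_natCast,
      Int.toNat_natCast]
    rcases lt_or_ge k n with hk | hk
    · exact (le_sum_col_sub_iff A c c' ⟨k, hk⟩).1 (h _)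
    · rw [sum_range_extendByZero_col A c hk, sum_range_extendByZero_col A c' (by omega), hsum]
  · intro h r
    simpa using (le_sum_col_sub_iff A c c' r).2 (h r)

/-- The matrix whose eigensteps are `m - eigenstep A j (j + 1 - r)`. -/
def naimarkComplement (n' : ℕ) (A : Matrix (Fin n) (Fin m) ℤ) : Matrix (Fin n') (Fin m) ℤ :=
  fun s j =>
    eigenstep A j (((j : ℕ) : ℤ) - (s : ℕ)) - eigenstep A (j + 1) (((j : ℕ) : ℤ) + 1 - (s : ℕ))

section Complement

variable {n' : ℕ} {A : Matrix (Fin n) (Fin m) ℤ}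

lemma eigenstep_naimarkComplement (hn : n' + n = m) (h0 : ∀ i j, 0 ≤ A i j)
    (hrow : ∀ i, ∑ j, A i j = m) (hiv : RowDominant A) {j : ℕ} (hj : j ≤ m) (r : ℤ) :
    eigenstep (naimarkComplement n' A) j r = m - eigenstep A j (j + 1 - r) := by
  rcases le_or_gt r 0 with hr | hr
  · rw [eigenstep_of_nonpos _ j hr, eigenstep_eq_zero_of_lt h0 hrow hiv hj (by omega), sub_zero]
  rcases lt_or_ge (n' : ℤ) r with hr' | hr'
  · rw [eigenstep_of_lt _ j hr', eigenstep_eq_of_add_le h0 hrow hiv hj (by omega), sub_self]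
  obtain ⟨s, rfl⟩ : ∃ s : ℕ, r = s + 1 := ⟨r.toNat - 1, by omega⟩
  let f : ℕ → ℤ := fun u => eigenstep A u ((u : ℤ) - s)
  have hentry : ∀ c ∈ range j, extendByZero (naimarkComplement n' A) s c = f c - f (c + 1) := by
    intro c hc
    have hc : c < m := (mem_range.1 hc).trans_le hj
    rw [extendByZero, dif_pos ⟨by omega, hc⟩]
    simp only [naimarkComplement, f]
    push_cast
    ring_nf
  rw [eigenstep_natCast_add_one, sum_congr rfl hentry, sum_range_sub']
  simp only [f, CharP.cast_eq_zero, zero_sub, eigenstep_of_nonpos A 0 (by omega : -(s : ℤ) ≤ 0)]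
  ring_nf

lemma cumEigenstep_naimarkComplement (hn : n' + n = m) (h0 : ∀ i j, 0 ≤ A i j)
    (hrow : ∀ i, ∑ j, A i j = m) (hcol : ∀ j, ∑ i, A i j = n) (hiv : RowDominant A) {j : ℕ}
    (hj : j ≤ m) (a : ℤ) :
    cumEigenstep (naimarkComplement n' A) j a = a * m - j * n + cumEigenstep A j (j - a) := by
  have step : ∀ b : ℤ, cumEigenstep (naimarkComplement n' A) j b -
      cumEigenstep (naimarkComplement n' A) j (b - 1) =
        m - (cumEigenstep A j (j - (b - 1)) - cumEigenstep A j (j - b)) := by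
    intro b
    rw [cumEigenstep_sub_one, eigenstep_naimarkComplement hn h0 hrow hiv hj,
      show (j : ℤ) - b = j - (b - 1) - 1 by ring, cumEigenstep_sub_one]
    ring_nf
  induction a using Int.induction_on with
  | zero =>
    rw [sub_zero, cumEigenstep_self h0 hrow hcol hiv hj]
    simp [cumEigenstep]
  | succ b ih =>
    have := step (b + 1)
    rw [add_sub_cancel_right] at this
    linarith
  | pred b ih => linarith [step (-b)]

lemma naimarkComplement_naimarkComplement (hn : n' + n = m) (h0 : ∀ i j, 0 ≤ A i j)
    (hrow : ∀ i, ∑ j, A i j = m) (hiv : RowDominant A) :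
    naimarkComplement n (naimarkComplement n' A) = A := by
  ext i j
  simp only [naimarkComplement]
  rw [eigenstep_naimarkComplement hn h0 hrow hiv j.isLt.le,
    eigenstep_naimarkComplement hn h0 hrow hiv (j := j + 1) j.isLt, ← extendByZero_coe A,
    ← eigenstep_succ_sub,
    show ((j : ℕ) : ℤ) + 1 - (((j : ℕ) : ℤ) - (i : ℕ)) = (i : ℕ) + 1 by ring,
    show (((j : ℕ) + 1 : ℕ) : ℤ) + 1 - (((j : ℕ) : ℤ) + 1 - (i : ℕ)) = (i : ℕ) + 1 by
      push_cast; ring]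
  ring

lemma naimarkComplement_nonneg (h0 : ∀ i j, 0 ≤ A i j) (hrow : ∀ i, ∑ j, A i j = m)
    (hiv : RowDominant A) (s : Fin n') (j : Fin m) : 0 ≤ naimarkComplement n' A s j := by
  have h := eigenstep_succ_succ_le h0 hrow hiv j.isLt (((j : ℕ) : ℤ) - (s : ℕ))
  rw [sub_add_eq_add_sub] at h
  exact sub_nonneg.2 h

lemma sum_naimarkComplement_row (hn : n' + n = m) (h0 : ∀ i j, 0 ≤ A i j)
    (hrow : ∀ i, ∑ j, A i j = m) (hiv : RowDominant A) (s : Fin n') :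
    ∑ j, naimarkComplement n' A s j = m := by
  rw [← eigenstep_row_sum, eigenstep_naimarkComplement hn h0 hrow hiv le_rfl,
    eigenstep_of_lt A m (by omega), sub_zero]

lemma sum_naimarkComplement_col (hn : n' + n = m) (h0 : ∀ i j, 0 ≤ A i j)
    (hrow : ∀ i, ∑ j, A i j = m) (hcol : ∀ j, ∑ i, A i j = n) (hiv : RowDominant A)
    (c : Fin m) : ∑ s, naimarkComplement n' A s c = n' := by
  rw [sum_col_eq_cumEigenstep_sub,
    cumEigenstep_naimarkComplement hn h0 hrow hcol hiv c.isLt,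
    cumEigenstep_naimarkComplement hn h0 hrow hcol hiv c.isLt.le,
    cumEigenstep_of_add_le h0 hrow hiv c.isLt (by push_cast; omega),
    cumEigenstep_of_add_le h0 hrow hiv c.isLt.le (by omega)]
  subst hn
  push_cast
  ring

lemma rowDominant_naimarkComplement (hn : n' + n = m) (h0 : ∀ i j, 0 ≤ A i j)
    (hrow : ∀ i, ∑ j, A i j = m) (hiv : RowDominant A) :
    RowDominant (naimarkComplement n' A) := by
  intro i i' hi l
  rw [le_sum_row_sub_iff_eigenstep_le _ hi,
    eigenstep_naimarkComplement hn h0 hrow hiv (j := l + 1) l.isLt,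
    eigenstep_naimarkComplement hn h0 hrow hiv l.isLt.le,
    show (((l : ℕ) + 1 : ℕ) : ℤ) + 1 - ((i : ℕ) + 1 + 1) = ((l : ℕ) : ℤ) - (i : ℕ) by
      push_cast; ring,
    show ((l : ℕ) : ℤ) + 1 - ((i : ℕ) + 1) = ((l : ℕ) : ℤ) - (i : ℕ) by ring]
  exact sub_le_sub_left (eigenstep_le_succ h0 l _) _

lemma columnDominant_naimarkComplement (hn : n' + n = m) (h0 : ∀ i j, 0 ≤ A i j)
    (hrow : ∀ i, ∑ j, A i j = m) (hcol : ∀ j, ∑ i, A i j = n) (hiv : RowDominant A)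
    {c c' : Fin m} (hc : (c' : ℕ) = c + 1) (hv : ColumnDominant A c c') :
    ColumnDominant (naimarkComplement n' A) c c' := by
  rw [columnDominant_iff_cumEigenstep hc (by rw [hcol, hcol])] at hv
  have hsum := sum_naimarkComplement_col hn h0 hrow hcol hiv
  rw [columnDominant_iff_cumEigenstep hc (by rw [hsum, hsum])]
  intro a
  have h := hv (((c : ℕ) : ℤ) - a)
  have hc' : ((c' : ℕ) : ℤ) = (c : ℕ) + 1 := by exact_mod_cast hc
  rw [cumEigenstep_naimarkComplement hn h0 hrow hcol hiv (j := c' + 1) c'.isLt,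
    cumEigenstep_naimarkComplement hn h0 hrow hcol hiv c'.isLt.le,
    cumEigenstep_naimarkComplement hn h0 hrow hcol hiv c'.isLt.le,
    cumEigenstep_naimarkComplement hn h0 hrow hcol hiv c.isLt.le]
  push_cast
  rw [hc', show ((c : ℕ) : ℤ) + 1 + 1 - (a + 1) = (c : ℕ) - a + 1 by ring,
    show ((c : ℕ) : ℤ) + 1 - (a + 1) = (c : ℕ) - a by ring,
    show ((c : ℕ) : ℤ) + 1 - a = (c : ℕ) - a + 1 by ring]
  linarith

theorem isConfig_naimarkComplement {K : ℕ} {L : Fin K → ℕ} (hn : n' + n = m)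
    (hA : IsConfig n K m L A) : IsConfig n' K m L (naimarkComplement n' A) := by
  obtain ⟨hM, h0, hrow, hcol, hiv, hv⟩ := hA
  exact ⟨hM, naimarkComplement_nonneg h0 hrow hiv, sum_naimarkComplement_row hn h0 hrow hiv,
    sum_naimarkComplement_col hn h0 hrow hcol hiv, rowDominant_naimarkComplement hn h0 hrow hiv,
    fun k c c' hc hstart hend => columnDominant_naimarkComplement hn h0 hrow hcol hiv hc
      (hv k c c' hc hstart hend)⟩

end Complement

theorem ncard_setOf_isConfig_eq {K n' : ℕ} (L : Fin K → ℕ) (hn : n' + n = m) :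
    {A : Matrix (Fin n) (Fin m) ℤ | IsConfig n K m L A}.ncard =
      {B : Matrix (Fin n') (Fin m) ℤ | IsConfig n' K m L B}.ncard := by
  have hn' : n + n' = m := by omega
  have hinv : Set.InvOn (naimarkComplement n) (naimarkComplement n')
      {A | IsConfig n K m L A} {B | IsConfig n' K m L B} := by
    constructor
    · rintro A ⟨-, h0, hrow, -, hiv, -⟩
      exact naimarkComplement_naimarkComplement hn h0 hrow hiv
    · rintro B ⟨-, h0, hrow, -, hiv, -⟩
      exact naimarkComplement_naimarkComplement hn' h0 hrow hiv
  exact (hinv.bijOn (fun A hA => isConfig_naimarkComplement hn hA)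
    fun B hB => isConfig_naimarkComplement hn' hB).ncard_eq

end ConfigMatrix

theorem config_naimark_duality_general (N K : ℕ)
    (L : Fin K → ℕ)
    (M : ℕ) (hMN : N < M) :
    Set.ncard {A : Matrix (Fin N) (Fin M) ℤ | IsConfig N K M L A} =
      Set.ncard {B : Matrix (Fin (M - N)) (Fin M) ℤ | IsConfig (M - N) K M L B} :=
  ConfigMatrix.ncard_setOf_isConfig_eq L (by omega)

/-- Combinatorial Naimark duality: for `M = Σᵢ Lᵢ > N`, the number of configuration
matrices for `(L_1, …, L_K; N)` equals the number of configuration matrices for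
`(L_1, …, L_K; M - N)`, i.e. the Littlewood–Richardson coefficients
`c((N^{L_1}),…,(N^{L_K});(M^N))` and `c(((M-N)^{L_1}),…,((M-N)^{L_K});(M^{M-N}))`
are equal. -/
theorem config_naimark_duality (N K : ℕ) (hN : 0 < N)
    (L : Fin K → ℕ) (hL : Antitone L) (hpos : ∀ i, 0 < L i) (hLN : ∀ i, L i ≤ N)
    (M : ℕ) (hM : M = ∑ i, L i) (hMN : N < M) :
    Set.ncard {A : Matrix (Fin N) (Fin M) ℤ | IsConfig N K M L A} =
      Set.ncard {B : Matrix (Fin (M - N)) (Fin M) ℤ | IsConfig (M - N) K M L B} :=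
  config_naimark_duality_general N K L M hMN
end
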